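/- arXiv:1204.4908 — 9 statements merged into one kernel-verified Lean document; each statement's English description precedes it below -/
import Mathlib

section
/- For every integer n ≥ 2, the Lie algebra u_n of triangular polynomial derivations is a solvable Lie algebra but not a nilpotent Lie algebra. -/
/-! An element of the `k`-th derived ideal of `u_n` kills `x₁, …, x_k`: if `D` and `E` kill the
variables below `x_i`, they also kill `D x_i, E x_i ∈ P_{i-1}`, so
`⁅D, E⁆ x_i = D (E x_i) - E (D x_i) = 0`. Hence the `n`-th derived ideal is zero.

On the other hand `⁅∂₁, x₁^{m+1} ∂₂⁆ = (m + 1) x₁^m ∂₂` with `m + 1` invertible in characteristic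
zero, so every `x₁^m ∂₂`, in particular `∂₂ ≠ 0`, lies in every term of the lower central series. -/

open MvPolynomial

noncomputable section


/-- If a derivation of `MvPolynomial σ K` maps every generator `X j`, `j ∈ s`, into the
subalgebra `supported K s` of polynomials supported on `s`, then it maps the whole of
`supported K s` into itself. -/
theorem Derivation.mem_supported_of_forall_mem
    {K : Type*} [CommRing K] {σ : Type*} (s : Set σ)
    (D : Derivation K (MvPolynomial σ K) (MvPolynomial σ K))
    (h : ∀ j ∈ s, D (X j) ∈ supported K s)
    {p : MvPolynomial σ K} (hp : p ∈ supported K s) : D p ∈ supported K s := by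
  rw [supported_eq_adjoin_X] at hp
  induction hp using Algebra.adjoin_induction with
  | mem x hx =>
    obtain ⟨j, hj, rfl⟩ := hx
    exact h j hj
  | algebraMap r =>
    rw [Derivation.map_algebraMap]
    exact zero_mem _
  | add x y hx hy ihx ihy =>
    rw [map_add]
    exact add_mem ihx ihy
  | mul x y hx hy ihx ihy =>
    rw [Derivation.leibniz, smul_eq_mul, smul_eq_mul]
    rw [← supported_eq_adjoin_X] at hx hy
    exact add_mem (mul_mem hx ihy) (mul_mem hy ihx)

/-- If a derivation of `MvPolynomial σ K` kills every generator `X j`, `j ∈ s`, then it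
kills the whole subalgebra `supported K s`. -/
theorem Derivation.eq_zero_of_forall_eq_zero
    {K : Type*} [CommRing K] {σ : Type*} (s : Set σ)
    (D : Derivation K (MvPolynomial σ K) (MvPolynomial σ K))
    (h : ∀ j ∈ s, D (X j) = 0)
    {p : MvPolynomial σ K} (hp : p ∈ supported K s) : D p = 0 := by
  rw [supported_eq_adjoin_X] at hp
  induction hp using Algebra.adjoin_induction with
  | mem x hx =>
    obtain ⟨j, hj, rfl⟩ := hx
    exact h j hj
  | algebraMap r =>
    rw [Derivation.map_algebraMap]
  | add x y hx hy ihx ihy =>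
    rw [map_add, ihx, ihy, add_zero]
  | mul x y hx hy ihx ihy =>
    rw [Derivation.leibniz, ihx, ihy, smul_zero, smul_zero, add_zero]

/-- The defining condition for the Lie algebra `u_n = K∂₁ ⊕ P₁∂₂ ⊕ ⋯ ⊕ P_{n-1}∂ₙ` of
triangular polynomial derivations of `P_n = K[x₁,…,xₙ]` (variables indexed by `Fin n`,
zero-based): a derivation `D` of `P_n` is triangular iff, for every `i`, the polynomial
`D (X i)` only involves the variables `X j` with `j < i` (so the coefficient of `∂_i`
lies in `P_{i-1}`, where `P₀ = K`). -/
def triSet (K : Type*) [Field K] (n : ℕ) :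
    Set (Derivation K (MvPolynomial (Fin n) K) (MvPolynomial (Fin n) K)) :=
  {D | ∀ i : Fin n, D (X i) ∈ supported K {j : Fin n | (j : ℕ) < (i : ℕ)}}

theorem supported_upward {K : Type*} [Field K] {n : ℕ}
    (p : MvPolynomial (Fin n) K) (s t : Set (Fin n)) (hst : s ⊆ t)
    (hp : p ∈ supported K s) : p ∈ supported K t :=
  supported_mono hst hp

theorem triSet_stable {K : Type*} [Field K] {n : ℕ}
    {D : Derivation K (MvPolynomial (Fin n) K) (MvPolynomial (Fin n) K)}
    (hD : D ∈ triSet K n) (i : Fin n) :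
    ∀ j ∈ {j' : Fin n | (j' : ℕ) < (i : ℕ)},
      D (X j) ∈ supported K {j' : Fin n | (j' : ℕ) < (i : ℕ)} := by
  intro j hj
  refine supported_upward _ {j' : Fin n | (j' : ℕ) < (j : ℕ)} _ ?_ (hD j)
  intro l hl
  have hl' : (l : ℕ) < (j : ℕ) := hl
  have hj' : (j : ℕ) < (i : ℕ) := hj
  exact lt_trans hl' hj'

theorem triSet_lie {K : Type*} [Field K] {n : ℕ}
    {a b : Derivation K (MvPolynomial (Fin n) K) (MvPolynomial (Fin n) K)}
    (ha : a ∈ triSet K n) (hb : b ∈ triSet K n) : ⁅a, b⁆ ∈ triSet K n := by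
  intro i
  rw [Derivation.commutator_apply]
  exact sub_mem
    (Derivation.mem_supported_of_forall_mem _ a (triSet_stable ha i) (hb i))
    (Derivation.mem_supported_of_forall_mem _ b (triSet_stable hb i) (ha i))

/-- The Lie algebra `u_n = K∂₁ ⊕ P₁∂₂ ⊕ ⋯ ⊕ P_{n-1}∂ₙ` of triangular polynomial
derivations, as a Lie subalgebra of the Lie algebra of all `K`-derivations of the
polynomial algebra `P_n = K[x₁,…,xₙ]`. -/
def triangular (K : Type*) [Field K] (n : ℕ) :
    LieSubalgebra K (Derivation K (MvPolynomial (Fin n) K) (MvPolynomial (Fin n) K)) where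
  carrier := triSet K n
  add_mem' := fun {a b} ha hb i => by
    rw [Derivation.add_apply]; exact add_mem (ha i) (hb i)
  zero_mem' := fun i => by
    rw [Derivation.zero_apply]; exact zero_mem _
  smul_mem' := fun c a ha i => by
    rw [Derivation.smul_apply]; exact Subalgebra.smul_mem _ (ha i) c
  lie_mem' := fun {a b} ha hb => triSet_lie ha hb

theorem mem_triangular_iff {K : Type*} [Field K] {n : ℕ}
    (D : Derivation K (MvPolynomial (Fin n) K) (MvPolynomial (Fin n) K)) :
    D ∈ triangular K n ↔
      ∀ i : Fin n, D (X i) ∈ supported K {j : Fin n | (j : ℕ) < (i : ℕ)} := Iff.rfl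

namespace LieModule

theorem mem_lowerCentralSeries_of_forall_exists_lie_eq {R L M : Type*} [CommRing R] [LieRing L]
    [LieAlgebra R L] [AddCommGroup M] [Module R M] [LieRingModule L M] [LieModule R L M]
    {g : ℕ → M} (h : ∀ m, ∃ x : L, ⁅x, g (m + 1)⁆ = g m) (k m : ℕ) :
    g m ∈ lowerCentralSeries R L M k := by
  induction k generalizing m with
  | zero => exact LieSubmodule.mem_top _
  | succ k ih =>
    obtain ⟨x, hx⟩ := h m
    rw [lowerCentralSeries_succ, ← hx]
    exact LieSubmodule.lie_mem_lie (LieSubmodule.mem_top x) (ih (m + 1))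

theorem not_isNilpotent_of_forall_exists_lie_eq {L M : Type*} [LieRing L] [AddCommGroup M]
    [LieRingModule L M] {g : ℕ → M} (h : ∀ m, ∃ x : L, ⁅x, g (m + 1)⁆ = g m) (h₀ : g 0 ≠ 0) :
    ¬ IsNilpotent L M := by
  rintro ⟨k, hk⟩
  have h₀' := mem_lowerCentralSeries_of_forall_exists_lie_eq (R := ℤ) h k 0
  rw [hk, LieSubmodule.mem_bot] at h₀'
  exact h₀ h₀'

end LieModule

namespace MvPolynomial

theorem lie_pderiv_smul_pderiv {σ R : Type*} [CommRing R] (i j : σ) (f : MvPolynomial σ R) :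
    ⁅pderiv (R := R) i, f • pderiv (R := R) j⁆ = pderiv i f • pderiv j := by
  classical
  refine derivation_ext fun l => ?_
  simp only [Derivation.commutator_apply, Derivation.smul_apply, smul_eq_mul, pderiv_X,
    Pi.single_apply]
  split_ifs <;> simp

theorem lie_pderiv_X_pow_succ_smul_pderiv {σ R : Type*} [CommRing R] (i j : σ) (m : ℕ) :
    ⁅pderiv (R := R) i, (X i ^ (m + 1) : MvPolynomial σ R) • pderiv (R := R) j⁆ =
      (m + 1) • (X i ^ m : MvPolynomial σ R) • pderiv (R := R) j := by
  rw [lie_pderiv_smul_pderiv, pderiv_pow, pderiv_X_self, mul_one, Nat.add_sub_cancel,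
    ← nsmul_eq_mul, smul_assoc]

end MvPolynomial

namespace triangular

variable {K : Type*} [Field K] {n : ℕ}

variable (K n) in
def killIdeal (k : ℕ) : LieIdeal K (triangular K n) where
  carrier := {D | ∀ i : Fin n, (i : ℕ) < k → D.1 (X i) = 0}
  add_mem' hD hE i hi := by
    rw [AddMemClass.coe_add, Derivation.add_apply, hD i hi, hE i hi, add_zero]
  zero_mem' _ _ := rfl
  smul_mem' c D hD i hi := by
    rw [SetLike.val_smul, Derivation.smul_apply, hD i hi, smul_zero]
  lie_mem {D E} hE i hi := by
    rw [LieSubalgebra.coe_bracket, Derivation.commutator_apply, hE i hi, map_zero, zero_sub,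
      neg_eq_zero]
    exact Derivation.eq_zero_of_forall_eq_zero _ _ (fun j hj => hE j (hj.trans hi)) (D.2 i)

theorem lie_mem_killIdeal_succ {k : ℕ} {D E : triangular K n} (hD : D ∈ killIdeal K n k)
    (hE : E ∈ killIdeal K n k) : ⁅D, E⁆ ∈ killIdeal K n (k + 1) := by
  intro i hi
  have hD' : ∀ j : Fin n, (j : ℕ) < i → D.1 (X j) = 0 := fun j hj => hD j (by omega)
  have hE' : ∀ j : Fin n, (j : ℕ) < i → E.1 (X j) = 0 := fun j hj => hE j (by omega)
  rw [LieSubalgebra.coe_bracket, Derivation.commutator_apply,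
    Derivation.eq_zero_of_forall_eq_zero _ _ hD' (E.2 i),
    Derivation.eq_zero_of_forall_eq_zero _ _ hE' (D.2 i), sub_zero]

theorem derivedSeries_le_killIdeal (k : ℕ) :
    LieAlgebra.derivedSeries K (triangular K n) k ≤ killIdeal K n k := by
  induction k with
  | zero => exact fun _ _ i hi => absurd hi (Nat.not_lt_zero _)
  | succ k ih =>
    rw [LieAlgebra.derivedSeries_def, LieAlgebra.derivedSeriesOfIdeal_succ,
      ← LieAlgebra.derivedSeries_def, LieSubmodule.lie_le_iff]
    exact fun D hD E hE => lie_mem_killIdeal_succ (ih hD) (ih hE)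

theorem killIdeal_self_eq_bot : killIdeal K n n = ⊥ := by
  refine (LieSubmodule.eq_bot_iff _).mpr fun D hD => ?_
  exact Subtype.ext (derivation_ext fun i => hD i i.isLt)

theorem isSolvable : LieAlgebra.IsSolvable (triangular K n) :=
  LieAlgebra.IsSolvable.mk (eq_bot_mono (derivedSeries_le_killIdeal n) killIdeal_self_eq_bot)

theorem pderiv_mem (i : Fin n) : pderiv i ∈ triangular K n := fun j => by
  classical
  rw [pderiv_X, Pi.single_apply]
  split_ifs
  · exact one_mem _
  · exact zero_mem _

theorem X_pow_smul_pderiv_mem {i j : Fin n} (hij : i < j) (m : ℕ) :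
    (X i ^ m : MvPolynomial (Fin n) K) • pderiv j ∈ triangular K n := fun l => by
  classical
  rw [Derivation.smul_apply, smul_eq_mul, pderiv_X, Pi.single_apply]
  split_ifs with hl
  · rw [hl, mul_one]
    refine pow_mem (X_mem_supported.mpr ?_) m
    exact hij
  · rw [mul_zero]
    exact zero_mem _

theorem not_isNilpotent_of_lt [CharZero K] {i j : Fin n} (hij : i < j) :
    ¬ LieRing.IsNilpotent (triangular K n) := by
  let g : ℕ → triangular K n := fun m => ⟨X i ^ m • pderiv j, X_pow_smul_pderiv_mem hij m⟩
  refine LieModule.not_isNilpotent_of_forall_exists_lie_eq (g := g) (fun m => ?_) fun h => ?_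
  · let P : triangular K n := ⟨pderiv i, pderiv_mem i⟩
    have hP : ⁅P, g (m + 1)⁆ = (m + 1) • g m :=
      Subtype.ext (lie_pderiv_X_pow_succ_smul_pderiv i j m)
    refine ⟨((m + 1 : ℕ) : K)⁻¹ • P, ?_⟩
    rw [smul_lie, hP, ← Nat.cast_smul_eq_nsmul K, smul_smul,
      inv_mul_cancel₀ (Nat.cast_ne_zero.mpr m.succ_ne_zero), one_smul]
  · have h' := congrArg (fun D : triangular K n => D.1 (X j)) h
    simp [g] at h'

end triangular

/-- For every integer `n ≥ 2`, the Lie algebra `u_n` of triangular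
polynomial derivations is a solvable but not nilpotent Lie algebra. -/
theorem triangular_isSolvable_and_not_isNilpotent
    (K : Type*) [Field K] [CharZero K] (n : ℕ) (hn : 2 ≤ n) :
    LieAlgebra.IsSolvable ↥(triangular K n) ∧
      ¬ LieRing.IsNilpotent ↥(triangular K n) :=
  ⟨triangular.isSolvable, triangular.not_isNilpotent_of_lt (i := ⟨0, by omega⟩) (j := ⟨1, hn⟩)
    Nat.zero_lt_one⟩
end
end

section
/- For every integer n ≥ 2 and every integer i with 0 ≤ i ≤ n, the i-th term of the derived series of the Lie algebra u_n equals u_{n,i+1}; in particular the n-th term of the derived series is 0. -/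
open MvPolynomial

noncomputable section


/-- The subspace `u_{n,k+1} = ⊕_{j ≥ k+1} P_{j-1}∂_j` of `u_n` (1-based indexing as in the
paper): the triangular derivations whose coefficients at `∂₁, …, ∂_k` vanish, i.e.
(zero-based) `D (X j) = 0` for all `j < k`. -/
def lowIdeal (K : Type*) [Field K] (n k : ℕ) : Submodule K ↥(triangular K n) where
  carrier := {a | ∀ j : Fin n, (j : ℕ) < k → a.val (X j) = 0}
  add_mem' := by
    intro a b ha hb j hj
    have hab : (a + b : ↥(triangular K n)).val = a.val + b.val := rfl
    rw [hab, Derivation.add_apply, ha j hj, hb j hj, add_zero]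
  zero_mem' := by
    intro j hj
    have h0 : (0 : ↥(triangular K n)).val = 0 := rfl
    rw [h0, Derivation.zero_apply]
  smul_mem' := by
    intro c a ha j hj
    have hca : (c • a : ↥(triangular K n)).val = c • a.val := rfl
    rw [hca, Derivation.smul_apply, ha j hj, smul_zero]


section Aux

variable {K : Type*} [Field K] {n : ℕ}

/-- Formal antiderivative with respect to `X i`. -/
def integ [CharZero K] (i : Fin n) (f : MvPolynomial (Fin n) K) : MvPolynomial (Fin n) K :=
  ∑ m ∈ f.support, monomial (m + Finsupp.single i 1) (f.coeff m / (m i + 1))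

lemma integ_zero [CharZero K] (i : Fin n) : integ i (0 : MvPolynomial (Fin n) K) = 0 := by
  simp [integ]

lemma pderiv_integ [CharZero K] (i : Fin n) (f : MvPolynomial (Fin n) K) :
    pderiv i (integ i f) = f := by
  rw [integ, map_sum]
  conv_rhs => rw [f.as_sum]
  refine Finset.sum_congr rfl fun m _ => ?_
  rw [pderiv_monomial, add_tsub_cancel_right, Finsupp.add_apply, Finsupp.single_eq_same,
    Nat.cast_add, Nat.cast_one, div_mul_cancel₀]
  exact Nat.cast_add_one_ne_zero (m i)

lemma monomial_mem_supported {s : Set (Fin n)} {d : Fin n →₀ ℕ} (c : K)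
    (hd : ↑d.support ⊆ s) : monomial d c ∈ supported K s := by
  rw [mem_supported]
  by_cases hc : c = 0
  · simp [hc]
  · rw [vars_monomial hc]; exact hd

lemma integ_mem_supported [CharZero K] {s : Set (Fin n)} (i : Fin n) (hi : i ∈ s)
    {f : MvPolynomial (Fin n) K} (hf : f ∈ supported K s) : integ i f ∈ supported K s := by
  refine sum_mem fun m hm => monomial_mem_supported _ ?_
  have hms : ↑m.support ⊆ s := fun j hj =>
    (mem_supported.1 hf) ((mem_vars j).2 ⟨m, hm, by exact_mod_cast hj⟩)
  intro j hj
  have hj' : j ∈ m.support ∪ (Finsupp.single i 1).support := Finsupp.support_add (by exact_mod_cast hj)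
  rcases Finset.mem_union.1 hj' with h | h
  · exact hms h
  · have : j = i := Finset.mem_singleton.1 (Finsupp.support_single_subset h)
    exact this ▸ hi

lemma pderiv_mem_triangular (i : Fin n) :
    (pderiv i : Derivation K (MvPolynomial (Fin n) K) (MvPolynomial (Fin n) K)) ∈
      triangular K n := by
  intro j
  by_cases h : j = i
  · rw [h, pderiv_X_self]; exact one_mem _
  · rw [pderiv_X_of_ne h]; exact zero_mem _

/-- `lowIdeal` as a Lie ideal. -/
def lowLieIdeal (K : Type*) [Field K] (n k : ℕ) : LieIdeal K ↥(triangular K n) :=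
  { lowIdeal K n k with
    lie_mem := by
      intro x m hm j hj
      have hxm : (⁅x, m⁆ : ↥(triangular K n)).val = ⁅x.val, m.val⁆ := rfl
      show (⁅x, m⁆ : ↥(triangular K n)).val (X j) = 0
      rw [hxm, Derivation.commutator_apply, hm j hj, map_zero, zero_sub, neg_eq_zero]
      exact Derivation.eq_zero_of_forall_eq_zero _ m.val
        (fun l hl => hm l (lt_trans hl hj)) (x.2 j) }

lemma mem_lowLieIdeal_iff {k : ℕ} {a : ↥(triangular K n)} :
    a ∈ lowLieIdeal K n k ↔ ∀ j : Fin n, (j : ℕ) < k → a.val (X j) = 0 := Iff.rfl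

lemma derived_eq (K : Type*) [Field K] [CharZero K] (n : ℕ) :
    ∀ i : ℕ, i ≤ n →
      LieAlgebra.derivedSeries K ↥(triangular K n) i = lowLieIdeal K n i := by
  intro i
  induction i with
  | zero =>
    intro _
    apply le_antisymm
    · intro x _ j hj; exact absurd hj (Nat.not_lt_zero _)
    · exact le_top
  | succ i ih =>
    intro hi
    have hin : i < n := hi
    have IH := ih hin.le
    have IH' : LieAlgebra.derivedSeriesOfIdeal K ↥(triangular K n) i ⊤ = lowLieIdeal K n i := IH
    rw [LieAlgebra.derivedSeries_def, LieAlgebra.derivedSeriesOfIdeal_succ, IH']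
    apply le_antisymm
    · rw [LieSubmodule.lie_le_iff]
      intro x hx y hy j hj
      have hj' : (j : ℕ) ≤ i := Nat.lt_succ_iff.1 hj
      show (⁅x, y⁆ : ↥(triangular K n)).val (X j) = 0
      have hxy : (⁅x, y⁆ : ↥(triangular K n)).val = ⁅x.val, y.val⁆ := rfl
      rw [hxy, Derivation.commutator_apply, sub_eq_zero]
      rw [Derivation.eq_zero_of_forall_eq_zero _ x.val
        (fun l hl => hx l (lt_of_lt_of_le hl hj')) (y.2 j),
        Derivation.eq_zero_of_forall_eq_zero _ y.val
        (fun l hl => hy l (lt_of_lt_of_le hl hj')) (x.2 j)]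
    · intro D hD
      set ii : Fin n := ⟨i, hin⟩ with hii
      set E : Derivation K (MvPolynomial (Fin n) K) (MvPolynomial (Fin n) K) :=
        mkDerivation K (fun j => integ ii (D.val (X j))) with hE
      have hEX : ∀ j, E (X j) = integ ii (D.val (X j)) := fun j => mkDerivation_X _ _ j
      have hEtri : E ∈ triangular K n := by
        intro j
        rw [hEX]
        by_cases h : (i : ℕ) < (j : ℕ)
        · exact integ_mem_supported ii h (D.2 j)
        · have : D.val (X j) = 0 := hD j (by omega)
          rw [this, integ_zero]; exact zero_mem _
      have hDeq : D = ⁅(⟨pderiv ii, pderiv_mem_triangular ii⟩ : ↥(triangular K n)),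
          (⟨E, hEtri⟩ : ↥(triangular K n))⁆ := by
        apply Subtype.ext
        apply derivation_ext
        intro j
        show D.val (X j) = (⁅pderiv ii, E⁆ :
          Derivation K (MvPolynomial (Fin n) K) (MvPolynomial (Fin n) K)) (X j)
        rw [Derivation.commutator_apply, hEX, pderiv_integ]
        by_cases h : j = ii
        · rw [h, pderiv_X_self, Derivation.map_one_eq_zero, sub_zero]
        · rw [pderiv_X_of_ne h, map_zero, sub_zero]
      rw [hDeq]
      refine LieSubmodule.lie_mem_lie ?_ ?_
      · intro j hj
        show pderiv ii (X j) = 0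
        exact pderiv_X_of_ne (by simp only [hii]; exact Fin.ne_of_val_ne (Nat.ne_of_lt hj))
      · intro j hj
        show E (X j) = 0
        rw [hEX, hD j (Nat.lt_succ_of_lt hj), integ_zero]

end Aux

/-- For every integer `n ≥ 2` and every `0 ≤ i ≤ n`, the `i`-th term of the
derived series of `u_n` equals `u_{n,i+1}` (the triangular derivations with vanishing
coefficients at `∂₁,…,∂ᵢ`); in particular the `n`-th term of the derived series is `0`. -/
theorem triangular_derivedSeries_eq
    (K : Type*) [Field K] [CharZero K] (n : ℕ) (hn : 2 ≤ n) :
    (∀ i : ℕ, i ≤ n →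
      (LieAlgebra.derivedSeries K ↥(triangular K n) i : Set ↥(triangular K n)) =
        (lowIdeal K n i : Set ↥(triangular K n))) ∧
    LieAlgebra.derivedSeries K ↥(triangular K n) n = ⊥ := by
  constructor
  · intro i hi
    rw [derived_eq K n i hi]
    rfl
  · rw [derived_eq K n n le_rfl, LieSubmodule.eq_bot_iff]
    intro m hm
    apply Subtype.ext
    apply derivation_ext
    intro j
    rw [hm j j.isLt]
    rfl
end
end

section
/- For every integer n ≥ 2, all inner derivations of the Lie algebra u_n are locally nilpotent: for every u ∈ u_n and every v ∈ u_n there exists a natural number m such that (ad u)^m(v) = 0, where ad(u)(v) = [u,v]. -/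
open MvPolynomial

noncomputable section


/-! A triangular derivation `u` is locally nilpotent on the polynomial ring: `u (X i)` only
involves earlier variables, and by the Leibniz rule the elements killed by some power of a
derivation form a subalgebra. For an arbitrary `v`, induct on the variables: once
`wₘ := (ad u)^m v` kills `X j` for all `j < i` and all large `m`, it also kills `u (X i)`, so
`w_{m+1} (X i) = u (wₘ (X i))`, and the local nilpotency of `u` makes `wₘ (X i)` vanish too.
With finitely many variables, `wₘ` kills all of them, hence is zero, for large `m`. -/

namespace Derivation

variable {R A : Type*} [CommRing R] [CommRing A] [Algebra R A]

theorem pow_add_apply_mul_eq_zero (D : Derivation R A A) {k l : ℕ} {a b : A}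
    (ha : ((D : Module.End R A) ^ k) a = 0) (hb : ((D : Module.End R A) ^ l) b = 0) :
    ((D : Module.End R A) ^ (k + l)) (a * b) = 0 := by
  induction k generalizing a b l with
  | zero => simp_all
  | succ k ihk =>
    induction l generalizing b with
    | zero => simp_all
    | succ l ihl =>
      have hDa : ((D : Module.End R A) ^ k) (D a) = 0 := by
        rwa [pow_succ, Module.End.mul_apply] at ha
      have hDb : ((D : Module.End R A) ^ l) (D b) = 0 := by
        rwa [pow_succ, Module.End.mul_apply] at hb
      rw [show k + 1 + (l + 1) = k + 1 + l + 1 by omega, pow_succ, Module.End.mul_apply,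
        coeFn_coe, leibniz, smul_eq_mul, smul_eq_mul, map_add, ihl hDb, mul_comm b,
        show k + 1 + l = k + (l + 1) by omega, ihk hDa hb, add_zero]

def locallyNilpotentSubalgebra (D : Derivation R A A) : Subalgebra R A where
  carrier := {a | ∃ k, ((D : Module.End R A) ^ k) a = 0}
  mul_mem' := fun ⟨_, hk⟩ ⟨_, hl⟩ => ⟨_, D.pow_add_apply_mul_eq_zero hk hl⟩
  add_mem' := fun {_ _} ⟨k, hk⟩ ⟨l, hl⟩ => ⟨max k l, by
    rw [map_add, Module.End.pow_map_zero_of_le (le_max_left k l) hk,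
      Module.End.pow_map_zero_of_le (le_max_right k l) hl, add_zero]⟩
  algebraMap_mem' r := ⟨1, by simp⟩

theorem mem_locallyNilpotentSubalgebra {D : Derivation R A A} {a : A} :
    a ∈ D.locallyNilpotentSubalgebra ↔ ∃ k, ((D : Module.End R A) ^ k) a = 0 :=
  Iff.rfl

theorem mem_locallyNilpotentSubalgebra_of_apply_mem {D : Derivation R A A} {a : A}
    (h : D a ∈ D.locallyNilpotentSubalgebra) : a ∈ D.locallyNilpotentSubalgebra := by
  obtain ⟨k, hk⟩ := h
  exact ⟨k + 1, by rwa [pow_succ, Module.End.mul_apply]⟩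

end Derivation

namespace MvPolynomial

variable {R σ : Type*} [CommRing R]

theorem supported_le_locallyNilpotentSubalgebra
    (D : Derivation R (MvPolynomial σ R) (MvPolynomial σ R)) {s : Set σ}
    (h : ∀ i ∈ s, X i ∈ D.locallyNilpotentSubalgebra) :
    supported R s ≤ D.locallyNilpotentSubalgebra := by
  rw [supported_eq_adjoin_X]
  exact Algebra.adjoin_le (by rintro _ ⟨i, hi, rfl⟩; exact h i hi)

variable [Preorder σ]

theorem locallyNilpotentSubalgebra_eq_top_of_triangular [WellFoundedLT σ]
    {D : Derivation R (MvPolynomial σ R) (MvPolynomial σ R)}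
    (hD : ∀ i, D (X i) ∈ supported R (Set.Iio i)) : D.locallyNilpotentSubalgebra = ⊤ := by
  have hX (i : σ) : X i ∈ D.locallyNilpotentSubalgebra := by
    induction i using WellFoundedLT.induction with
    | _ i ih =>
      exact Derivation.mem_locallyNilpotentSubalgebra_of_apply_mem
        (supported_le_locallyNilpotentSubalgebra D ih (hD i))
  rw [eq_top_iff, ← supported_univ]
  exact supported_le_locallyNilpotentSubalgebra D fun i _ => hX i

theorem exists_ad_pow_apply_eq_zero_of_triangular [Finite σ] [WellFoundedLT σ]
    {u : Derivation R (MvPolynomial σ R) (MvPolynomial σ R)}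
    (hu : ∀ i, u (X i) ∈ supported R (Set.Iio i))
    (v : Derivation R (MvPolynomial σ R) (MvPolynomial σ R)) :
    ∃ m, (LieAlgebra.ad R _ u ^ m) v = 0 := by
  set w : ℕ → Derivation R (MvPolynomial σ R) (MvPolynomial σ R) :=
    fun m => (LieAlgebra.ad R _ u ^ m) v with hw
  have hw_succ (m : ℕ) (p : MvPolynomial σ R) : w (m + 1) p = u (w m p) - w m (u p) := by
    simp only [hw]
    rw [pow_succ', Module.End.mul_apply, LieAlgebra.ad_apply, Derivation.commutator_apply]
  have hX (i : σ) : ∀ᶠ m in Filter.atTop, w m (X i) = 0 := by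
    induction i using WellFoundedLT.induction with
    | _ i ih =>
      obtain ⟨M, hM⟩ := Filter.eventually_atTop.1
        ((Filter.eventually_all_finite (Set.toFinite (Set.Iio i))).2 ih)
      have hw_iter (t : ℕ) : w (M + t) (X i) = ((u : Module.End R _) ^ t) (w M (X i)) := by
        induction t with
        | zero => rfl
        | succ t iht =>
          have hkill : w (M + t) (u (X i)) = 0 :=
            Derivation.eq_zero_of_forall_eq_zero _ _ (hM (M + t) (Nat.le_add_right M t)) (hu i)
          rw [← add_assoc, hw_succ, hkill, sub_zero, iht, pow_succ', Module.End.mul_apply]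
          rfl
      have hloc : w M (X i) ∈ u.locallyNilpotentSubalgebra := by
        rw [locallyNilpotentSubalgebra_eq_top_of_triangular hu]
        exact Algebra.mem_top
      obtain ⟨k, hk⟩ := Derivation.mem_locallyNilpotentSubalgebra.1 hloc
      refine Filter.eventually_atTop.2 ⟨M + k, fun m hm => ?_⟩
      obtain ⟨t, rfl⟩ := Nat.exists_eq_add_of_le (le_of_add_le_left hm)
      rw [hw_iter]
      exact Module.End.pow_map_zero_of_le (by omega) hk
  obtain ⟨m, hm⟩ := (Filter.eventually_all.2 hX).exists
  exact ⟨m, derivation_ext hm⟩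

end MvPolynomial

theorem triangular_ad_locally_nilpotent_general
    (K : Type*) [Field K] (n : ℕ)
    (u v : ↥(triangular K n)) :
    ∃ m : ℕ, ((LieAlgebra.ad K ↥(triangular K n) u) ^ m) v = 0 := by
  obtain ⟨m, hm⟩ := exists_ad_pow_apply_eq_zero_of_triangular ((mem_triangular_iff _).1 u.2) v
  exact ⟨m, Subtype.ext ((LieSubalgebra.coe_ad_pow K _ _ u v m).trans hm)⟩

/-- For every `n ≥ 2`, all inner derivations of the Lie algebra `u_n` are
locally nilpotent: for all `u v ∈ u_n` there is an `m` with `(ad u)^m v = 0`. -/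
theorem triangular_ad_locally_nilpotent
    (K : Type*) [Field K] [CharZero K] (n : ℕ) (hn : 2 ≤ n)
    (u v : ↥(triangular K n)) :
    ∃ m : ℕ, ((LieAlgebra.ad K ↥(triangular K n) u) ^ m) v = 0 :=
  triangular_ad_locally_nilpotent_general K n u v
end
end

section
/- For every integer n ≥ 2, the centre of the Lie algebra u_n equals the one-dimensional subspace K∂_n. -/
/-!
A derivation `D` in the centre of `u_n` commutes with every `∂ₖ`, so all partial derivatives
of each `D xᵢ` vanish and, in characteristic zero, `D xᵢ` is a constant. For `i < n`, the
bracket `[xᵢ∂ₙ, D]` evaluated at `xₙ` is `xᵢ ∂ₙ(D xₙ) - D xᵢ = -D xᵢ`, so `D xᵢ = 0` and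
`D = c ∂ₙ`. Conversely `∂ₙ` is central: no coefficient of a triangular derivation involves
`xₙ`, and `∂ₙ xᵢ` is a constant.
-/

open MvPolynomial

noncomputable section


/-- The partial derivative `∂ᵢ` as an element of the Lie algebra `u_n`. -/
def pd (K : Type*) [Field K] (n : ℕ) (i : Fin n) : ↥(triangular K n) :=
  ⟨pderiv i, by
    intro j
    rcases eq_or_ne j i with rfl | h
    · rw [pderiv_X_self]
      exact one_mem _
    · rw [pderiv_X_of_ne h]
      exact zero_mem _⟩

namespace MvPolynomial

variable {R σ : Type*}

theorem eq_C_of_forall_pderiv_eq_zero [CommSemiring R] [NoZeroDivisors R] [CharZero R]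
    {p : MvPolynomial σ R} (h : ∀ k, pderiv k p = 0) : p = C (coeff 0 p) := by
  classical
  ext m
  rcases eq_or_ne m 0 with rfl | hm
  · rw [coeff_C, if_pos rfl]
  rw [coeff_C, if_neg (Ne.symm hm)]
  obtain ⟨k, hk⟩ := Finsupp.ne_iff.mp hm
  have hle : Finsupp.single k 1 ≤ m := Finsupp.single_le_iff.mpr (Nat.one_le_iff_ne_zero.mpr hk)
  have hcoeff := coeff_pderiv (i := k) p (m - Finsupp.single k 1)
  rw [h k, coeff_zero, tsub_add_cancel_of_le hle] at hcoeff
  exact (mul_eq_zero.mp hcoeff.symm).resolve_right (Nat.cast_add_one_ne_zero _)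

variable [CommRing R] (D : Derivation R (MvPolynomial σ R) (MvPolynomial σ R))

theorem derivation_pderiv_X (k i : σ) : D (pderiv (R := R) k (X i)) = 0 := by
  rcases eq_or_ne i k with rfl | h
  · rw [pderiv_X_self, Derivation.map_one_eq_zero]
  · rw [pderiv_X_of_ne h, map_zero]

theorem commutator_pderiv_apply_X (k i : σ) :
    ⁅pderiv (R := R) k, D⁆ (X i) = pderiv k (D (X i)) := by
  rw [Derivation.commutator_apply, derivation_pderiv_X, sub_zero]

theorem commutator_smul_pderiv_apply_X_self (p : MvPolynomial σ R) (k : σ) :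
    ⁅p • pderiv (R := R) k, D⁆ (X k) = p * pderiv k (D (X k)) - D p := by
  rw [Derivation.commutator_apply, Derivation.smul_apply, Derivation.smul_apply, pderiv_X_self,
    smul_eq_mul, smul_eq_mul, mul_one]

end MvPolynomial

section Triangular

variable {K : Type*} [Field K] {n : ℕ}

theorem X_smul_pderiv_mem_triangular {i k : Fin n} (hik : i < k) :
    ((X i : MvPolynomial (Fin n) K) • pderiv k :
      Derivation K (MvPolynomial (Fin n) K) (MvPolynomial (Fin n) K)) ∈ triangular K n := by
  intro j
  rw [Derivation.smul_apply, smul_eq_mul]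
  rcases eq_or_ne j k with rfl | hjk
  · rw [pderiv_X_self, mul_one]
    exact X_mem_supported.mpr hik
  · rw [pderiv_X_of_ne hjk, mul_zero]
    exact zero_mem _

theorem lie_pderiv_eq_zero_of_mem_triangular
    {D : Derivation K (MvPolynomial (Fin n) K) (MvPolynomial (Fin n) K)}
    (hD : D ∈ triangular K n) {l : Fin n} (hl : IsTop l) : ⁅D, pderiv (R := K) l⁆ = 0 := by
  refine derivation_ext fun i => ?_
  have hl_notMem : l ∉ {j : Fin n | (j : ℕ) < i} := fun h => (hl i).not_gt h
  rw [Derivation.commutator_apply, derivation_pderiv_X, Derivation.zero_apply, zero_sub,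
    neg_eq_zero]
  exact Derivation.eq_zero_of_forall_eq_zero _ (pderiv l)
    (fun j hj => pderiv_X_of_ne (ne_of_mem_of_not_mem hj hl_notMem)) (hD i)

theorem eq_smul_pderiv_of_forall_lie_eq_zero [CharZero K]
    {D : Derivation K (MvPolynomial (Fin n) K) (MvPolynomial (Fin n) K)}
    (hD : ∀ E ∈ triangular K n, ⁅E, D⁆ = 0) {l : Fin n} (hl : IsTop l) :
    D = coeff 0 (D (X l)) • pderiv l := by
  have hpderiv : ∀ k i, pderiv k (D (X i)) = 0 := fun k i => by
    rw [← commutator_pderiv_apply_X, hD (pderiv k) (pd K n k).2, Derivation.zero_apply]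
  have hzero : ∀ i ≠ l, D (X i) = 0 := fun i hi => by
    have h := commutator_smul_pderiv_apply_X_self D (X i) l
    rw [hD _ (X_smul_pderiv_mem_triangular (lt_of_le_of_ne (hl i) hi)), hpderiv, mul_zero,
      zero_sub, Derivation.zero_apply] at h
    exact neg_eq_zero.mp h.symm
  refine derivation_ext fun i => ?_
  rw [Derivation.smul_apply]
  rcases eq_or_ne i l with rfl | hi
  · rw [pderiv_X_self, smul_eq_C_mul, mul_one]
    exact eq_C_of_forall_pderiv_eq_zero fun k => hpderiv k i
  · rw [pderiv_X_of_ne hi, smul_zero, hzero i hi]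

end Triangular

/-- For every `n ≥ 2`, the centre of the Lie algebra `u_n` equals the
one-dimensional subspace `K∂ₙ`. -/
theorem triangular_center_eq
    (K : Type*) [Field K] [CharZero K] (n : ℕ) (hn : 2 ≤ n) :
    ∀ z : ↥(triangular K n),
      z ∈ LieAlgebra.center K ↥(triangular K n) ↔
        ∃ c : K, z = c • pd K n ⟨n - 1, by omega⟩ := by
  have hl : IsTop (⟨n - 1, by omega⟩ : Fin n) := fun i => Fin.mk_le_mk.mpr (by omega)
  intro z
  rw [LieAlgebra.center, LieModule.mem_maxTrivSubmodule]
  constructor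
  · intro hz
    exact ⟨_, Subtype.ext
      (eq_smul_pderiv_of_forall_lie_eq_zero (fun E hE => congrArg Subtype.val (hz ⟨E, hE⟩)) hl)⟩
  · rintro ⟨c, rfl⟩ x
    refine Subtype.ext ?_
    change ⁅x.1, c • pderiv _⁆ = 0
    rw [lie_smul, lie_pderiv_eq_zero_of_mem_triangular x.2 hl, smul_zero]
end
end

section
/- For all integers n and m with 2 ≤ n < m, the Lie algebras u_n and u_m are not isomorphic as Lie algebras over K. -/
open MvPolynomial

noncomputable section


namespace TriAux

open LieAlgebra

variable {K : Type*} [Field K]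

theorem pderiv_eq_zero_of_supported {n : ℕ} {s : Set (Fin n)} {k : Fin n} (hk : k ∉ s)
    {f : MvPolynomial (Fin n) K} (hf : f ∈ supported K s) : pderiv k f = 0 := by
  rw [supported_eq_adjoin_X] at hf
  induction hf using Algebra.adjoin_induction with
  | mem x hx =>
    obtain ⟨j, hj, rfl⟩ := hx
    exact pderiv_X_of_ne (fun h => hk (h ▸ hj))
  | algebraMap r => exact (pderiv k).map_algebraMap r
  | add x y hx hy ihx ihy => rw [map_add, ihx, ihy, add_zero]
  | mul x y hx hy ihx ihy =>
    rw [Derivation.leibniz, ihx, ihy, smul_zero, smul_zero, add_zero]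

/-- A derivation killing `X i` for all `i < k` kills everything supported below `k`. -/
theorem kills_supported {n : ℕ} {k : ℕ}
    {b : Derivation K (MvPolynomial (Fin n) K) (MvPolynomial (Fin n) K)}
    (hb : ∀ i : Fin n, (i : ℕ) < k → b (X i) = 0)
    {p : MvPolynomial (Fin n) K} (hp : p ∈ supported K {j : Fin n | (j : ℕ) < k}) :
    b p = 0 :=
  Derivation.eq_zero_of_forall_eq_zero _ b (fun j hj => hb j hj) hp

/-- The ideal of triangular derivations vanishing on `X i` for `i < k`. -/
def vanIdeal (K : Type*) [Field K] (n k : ℕ) : LieIdeal K ↥(triangular K n) where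
  carrier := {D | ∀ i : Fin n, (i : ℕ) < k →
    (D : Derivation K (MvPolynomial (Fin n) K) (MvPolynomial (Fin n) K)) (X i) = 0}
  add_mem' := fun {a b} ha hb i hi => by
    have : ((a + b : ↥(triangular K n)) :
        Derivation K (MvPolynomial (Fin n) K) (MvPolynomial (Fin n) K)) = ↑a + ↑b := rfl
    rw [this, Derivation.add_apply, ha i hi, hb i hi, add_zero]
  zero_mem' := fun i _ => rfl
  smul_mem' := fun c a ha i hi => by
    have : ((c • a : ↥(triangular K n)) :
        Derivation K (MvPolynomial (Fin n) K) (MvPolynomial (Fin n) K)) = c • ↑a := rfl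
    rw [this, Derivation.smul_apply, ha i hi, smul_zero]
  lie_mem := fun {x b} hb i hi => by
    rw [LieSubalgebra.coe_bracket, Derivation.commutator_apply, hb i hi, map_zero]
    rw [kills_supported (fun l hl => hb l hl)
      (supported_mono (fun l hl => lt_trans hl hi) (x.2 i))]
    rw [sub_zero]

theorem mem_vanIdeal_iff {n k : ℕ} (D : ↥(triangular K n)) :
    D ∈ vanIdeal K n k ↔ ∀ i : Fin n, (i : ℕ) < k →
      (D : Derivation K (MvPolynomial (Fin n) K) (MvPolynomial (Fin n) K)) (X i) = 0 :=
  Iff.rfl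

theorem derivedSeries_le_vanIdeal (n : ℕ) (k : ℕ) :
    derivedSeries K ↥(triangular K n) k ≤ vanIdeal K n k := by
  induction k with
  | zero => exact fun x _ i hi => absurd hi (Nat.not_lt_zero _)
  | succ k ih =>
    have hsucc : derivedSeries K ↥(triangular K n) (k + 1) =
        ⁅derivedSeries K ↥(triangular K n) k, derivedSeries K ↥(triangular K n) k⁆ := by
      rw [derivedSeries_def, derivedSeries_def, derivedSeriesOfIdeal_succ]
    rw [hsucc]
    refine le_trans (LieSubmodule.mono_lie ih ih) ?_
    rw [LieSubmodule.lie_le_iff]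
    intro a ha b hb
    rw [mem_vanIdeal_iff] at ha hb ⊢
    intro i hi
    rw [LieSubalgebra.coe_bracket, Derivation.commutator_apply]
    have hik : ∀ l : Fin n, (l : ℕ) < (i : ℕ) → (l : ℕ) < k := fun l hl =>
      lt_of_lt_of_le hl (Nat.lt_succ_iff.mp hi)
    rw [kills_supported (fun l hl => ha l hl) (supported_mono (fun l hl => hik l hl) (b.2 i)),
      kills_supported (fun l hl => hb l hl) (supported_mono (fun l hl => hik l hl) (a.2 i)),
      sub_zero]

theorem derivedSeries_triangular_eq_bot (n : ℕ) :
    derivedSeries K ↥(triangular K n) n = ⊥ := by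
  rw [eq_bot_iff]
  intro D hD
  have h := (mem_vanIdeal_iff D).mp (derivedSeries_le_vanIdeal n n hD)
  have hval : (D : Derivation K (MvPolynomial (Fin n) K) (MvPolynomial (Fin n) K)) = 0 := by
    refine Derivation.ext fun p => ?_
    have hp : p ∈ supported K (Set.univ : Set (Fin n)) := by
      rw [supported_univ]; trivial
    rw [Derivation.zero_apply]
    exact Derivation.eq_zero_of_forall_eq_zero _ _ (fun j _ => h j j.isLt) hp
  exact Subtype.ext hval

/-- The derivation `f ∂_j`. -/
def dd {n : ℕ} (f : MvPolynomial (Fin n) K) (j : Fin n) :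
    Derivation K (MvPolynomial (Fin n) K) (MvPolynomial (Fin n) K) :=
  mkDerivation K (fun i => if i = j then f else 0)

@[simp] theorem dd_X {n : ℕ} (f : MvPolynomial (Fin n) K) (j i : Fin n) :
    dd f j (X i) = if i = j then f else 0 := by
  exact mkDerivation_X K (fun i => if i = j then f else 0) i

theorem dd_one_eq_pderiv {n : ℕ} (k : Fin n) :
    dd (1 : MvPolynomial (Fin n) K) k = pderiv k := by
  apply derivation_ext
  intro i
  rw [dd_X]
  rcases eq_or_ne i k with rfl | h
  · rw [if_pos rfl, pderiv_X_self]
  · rw [if_neg h, pderiv_X_of_ne h]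

theorem dd_mem {n : ℕ} {f : MvPolynomial (Fin n) K} {j : Fin n}
    (hf : f ∈ supported K {l : Fin n | (l : ℕ) < (j : ℕ)}) : dd f j ∈ triangular K n := by
  intro i
  rw [dd_X]
  split_ifs with h
  · exact h ▸ hf
  · exact zero_mem _

theorem bracket_dd {n : ℕ} (k j : Fin n) (g : MvPolynomial (Fin n) K) :
    ⁅dd (1 : MvPolynomial (Fin n) K) k, dd g j⁆ = dd (pderiv k g) j := by
  apply derivation_ext
  intro i
  rw [Derivation.commutator_apply, dd_one_eq_pderiv]
  have h2 : dd g j ((pderiv k) (X i : MvPolynomial (Fin n) K)) = 0 := by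
    rcases eq_or_ne i k with rfl | hik
    · rw [pderiv_X_self]; exact (dd g j).map_one_eq_zero
    · rw [pderiv_X_of_ne hik, map_zero]
  rw [h2, sub_zero, dd_X, dd_X]
  split_ifs with h
  · rfl
  · exact map_zero _

theorem dd_mem_derivedSeries {m : ℕ} (k : ℕ) (j : Fin m) (hkj : k ≤ (j : ℕ))
    (f : MvPolynomial (Fin m) K)
    (hf : f ∈ supported K {i : Fin m | k ≤ (i : ℕ) ∧ (i : ℕ) < (j : ℕ)})
    (hmem : dd f j ∈ triangular K m) :
    (⟨dd f j, hmem⟩ : ↥(triangular K m)) ∈ derivedSeries K ↥(triangular K m) k := by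
  induction k generalizing j f with
  | zero =>
    have : derivedSeries K ↥(triangular K m) 0 = ⊤ := by
      rw [derivedSeries_def, derivedSeriesOfIdeal_zero]
    rw [this]; trivial
  | succ k ih =>
    have hkm : k < m := lt_of_lt_of_le (Nat.lt_of_succ_le hkj) j.isLt.le
    set κ : Fin m := ⟨k, hkm⟩ with hκ
    have hκj : (κ : ℕ) < (j : ℕ) := Nat.lt_of_succ_le hkj
    -- the two bracket factors
    have h1sup : (1 : MvPolynomial (Fin m) K) ∈
        supported K {i : Fin m | k ≤ (i : ℕ) ∧ (i : ℕ) < (κ : ℕ)} := one_mem _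
    have h1tri : dd (1 : MvPolynomial (Fin m) K) κ ∈ triangular K m :=
      dd_mem (one_mem _)
    have hA := ih κ le_rfl 1 h1sup h1tri
    have hXf : (X κ * f : MvPolynomial (Fin m) K) ∈
        supported K {i : Fin m | k ≤ (i : ℕ) ∧ (i : ℕ) < (j : ℕ)} := by
      refine mul_mem ?_ (supported_mono ?_ hf)
      · exact X_mem_supported.mpr ⟨le_rfl, hκj⟩
      · intro l hl; exact ⟨le_of_lt (Nat.lt_of_succ_le hl.1), hl.2⟩
    have hXftri : dd (X κ * f) j ∈ triangular K m :=
      dd_mem (supported_mono (fun l hl => hl.2) hXf)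
    have hB := ih j (Nat.le_of_succ_le hkj) (X κ * f) hXf hXftri
    have hbr : (⁅(⟨dd 1 κ, h1tri⟩ : ↥(triangular K m)), ⟨dd (X κ * f) j, hXftri⟩⁆ :
        ↥(triangular K m)) = ⟨dd f j, hmem⟩ := by
      apply Subtype.ext
      have hco : ((⁅(⟨dd 1 κ, h1tri⟩ : ↥(triangular K m)), ⟨dd (X κ * f) j, hXftri⟩⁆ :
          ↥(triangular K m)) :
          Derivation K (MvPolynomial (Fin m) K) (MvPolynomial (Fin m) K)) =
          ⁅dd 1 κ, dd (X κ * f) j⁆ := rfl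
      rw [hco, bracket_dd]
      have hpd : pderiv κ (X κ * f) = f := by
        have hf0 : pderiv κ f = 0 := by
          refine pderiv_eq_zero_of_supported ?_ hf
          intro hκmem
          exact absurd hκmem.1 (by simp [hκ])
        rw [Derivation.leibniz, pderiv_X_self, hf0, smul_zero, smul_eq_mul, mul_one,
          zero_add]
      rw [hpd]
    have hsucc : derivedSeries K ↥(triangular K m) (k + 1) =
        ⁅derivedSeries K ↥(triangular K m) k, derivedSeries K ↥(triangular K m) k⁆ := by
      rw [derivedSeries_def, derivedSeries_def, derivedSeriesOfIdeal_succ]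
    rw [hsucc, ← hbr]
    exact LieSubmodule.lie_mem_lie hA hB

end TriAux

/-- For all `2 ≤ n < m`, the Lie algebras `u_n` and `u_m` are not
isomorphic as Lie algebras over `K`. -/
theorem triangular_not_isomorphic
    (K : Type*) [Field K] [CharZero K] (n m : ℕ) (hn : 2 ≤ n) (hnm : n < m) :
    IsEmpty (↥(triangular K n) ≃ₗ⁅K⁆ ↥(triangular K m)) := by
  constructor
  intro e
  classical
  -- the derived series of `u_n` vanishes at stage `n`
  have h1 : LieAlgebra.derivedSeries K ↥(triangular K n) n = ⊥ :=
    TriAux.derivedSeries_triangular_eq_bot n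
  -- transport along the isomorphism
  have h2 := LieIdeal.derivedSeries_map_eq (f := e.toLieHom) n e.surjective
  rw [h1] at h2
  have h3 : LieIdeal.map e.toLieHom (⊥ : LieIdeal K ↥(triangular K n)) = ⊥ := by
    rw [eq_bot_iff, LieIdeal.map_le]
    rintro x ⟨y, hy, rfl⟩
    simp only [SetLike.mem_coe, LieSubmodule.mem_bot] at hy ⊢
    rw [hy]; exact e.toLieHom.map_zero
  rw [h3] at h2
  -- but `∂_{n}` lies in the `n`-th derived subalgebra of `u_m`
  set j : Fin m := ⟨n, hnm⟩ with hj
  have h1sup : (1 : MvPolynomial (Fin m) K) ∈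
      supported K {i : Fin m | n ≤ (i : ℕ) ∧ (i : ℕ) < (j : ℕ)} := one_mem _
  have htri : TriAux.dd (1 : MvPolynomial (Fin m) K) j ∈ triangular K m :=
    TriAux.dd_mem (one_mem _)
  have hE := TriAux.dd_mem_derivedSeries n j le_rfl 1 h1sup htri
  rw [← h2] at hE
  have hE0 : (⟨TriAux.dd (1 : MvPolynomial (Fin m) K) j, htri⟩ : ↥(triangular K m)) = 0 := by
    rwa [LieSubmodule.mem_bot] at hE
  have : TriAux.dd (1 : MvPolynomial (Fin m) K) j = 0 := congrArg Subtype.val hE0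
  have hone : (1 : MvPolynomial (Fin m) K) = 0 := by
    have := congrArg (fun D : Derivation K (MvPolynomial (Fin m) K) (MvPolynomial (Fin m) K) =>
      D (X j)) this
    simpa using this
  exact one_ne_zero hone
end
end

section
/- Let n ≥ 2 and let a be an element of the Lie algebra u_n. The following are equivalent: (1) the inner derivation ad(a) of u_n is nilpotent (i.e., (ad a)^m = 0 for some natural number m); (2) a belongs to the abelian ideal P_{n-1}∂_n; (3) (ad a)^2 = 0. -/
open MvPolynomial

noncomputable section


section Helpers

variable {K : Type*} [Field K] {n : ℕ}

theorem kills_low {D : Derivation K (MvPolynomial (Fin n) K) (MvPolynomial (Fin n) K)}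
    (hQ : ∀ j : Fin n, (j : ℕ) + 1 < n → D (X j) = 0)
    {p : MvPolynomial (Fin n) K} {i : Fin n}
    (hp : p ∈ supported K {j : Fin n | (j : ℕ) < (i : ℕ)}) : D p = 0 :=
  Derivation.eq_zero_of_forall_eq_zero {j : Fin n | (j : ℕ) + 1 < n} D
    (fun j hj => hQ j hj)
    (supported_mono (fun l hl => by
      have hl' : (l : ℕ) < (i : ℕ) := hl
      have := i.isLt
      show (l : ℕ) + 1 < n
      omega) hp)

theorem Q_bracket (a b : ↥(triangular K n))
    (hQ : ∀ j : Fin n, (j : ℕ) + 1 < n → a.val (X j) = 0) :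
    ∀ j : Fin n, (j : ℕ) + 1 < n → ⁅a.val, b.val⁆ (X j) = 0 := by
  intro j hj
  rw [Derivation.commutator_apply, kills_low hQ ((mem_triangular_iff _).mp b.2 j),
    hQ j hj, map_zero, sub_zero]

theorem sq_zero (a : ↥(triangular K n))
    (hQ : ∀ j : Fin n, (j : ℕ) + 1 < n → a.val (X j) = 0) :
    (LieAlgebra.ad K ↥(triangular K n) a) ^ 2 = 0 := by
  apply LinearMap.ext
  intro b
  rw [pow_two, Module.End.mul_apply, LieAlgebra.ad_apply, LieAlgebra.ad_apply,
    LinearMap.zero_apply]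
  apply Subtype.ext
  rw [LieSubalgebra.coe_bracket, LieSubalgebra.coe_bracket]
  show ⁅a.val, ⁅a.val, b.val⁆⁆ = (0 : Derivation K _ _)
  apply derivation_ext
  intro i
  rw [Derivation.commutator_apply,
    kills_low hQ (triSet_lie a.2 b.2 i),
    kills_low (Q_bracket a b hQ) ((mem_triangular_iff _).mp a.2 i),
    sub_zero, Derivation.zero_apply]

variable (K) in
/-- The element `p ∂ₙ` of the triangular Lie algebra. -/
def Emk (hn : 2 ≤ n) (p : MvPolynomial (Fin n) K)
    (hp : p ∈ supported K {j : Fin n | (j : ℕ) + 1 < n}) : ↥(triangular K n) :=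
  ⟨MvPolynomial.mkDerivation K (fun j : Fin n => if (j : ℕ) = n - 1 then p else 0), by
    intro i
    rw [mkDerivation_X]
    split_ifs with hi
    · exact supported_mono (fun l hl => by
        have : (l : ℕ) + 1 < n := hl
        show (l : ℕ) < (i : ℕ)
        omega) hp
    · exact zero_mem _⟩

theorem Emk_val (hn : 2 ≤ n) (p : MvPolynomial (Fin n) K)
    (hp : p ∈ supported K {j : Fin n | (j : ℕ) + 1 < n}) :
    (Emk K hn p hp).val
      = MvPolynomial.mkDerivation K (fun j : Fin n => if (j : ℕ) = n - 1 then p else 0) := rfl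

theorem Emk_Q (hn : 2 ≤ n) (p : MvPolynomial (Fin n) K)
    (hp : p ∈ supported K {j : Fin n | (j : ℕ) + 1 < n}) :
    ∀ j : Fin n, (j : ℕ) + 1 < n → (Emk K hn p hp).val (X j) = 0 := by
  intro j hj
  rw [Emk_val, mkDerivation_X, if_neg (by omega)]

theorem triangular_stable (a : ↥(triangular K n)) {p : MvPolynomial (Fin n) K}
    (hp : p ∈ supported K {j : Fin n | (j : ℕ) + 1 < n}) :
    a.val p ∈ supported K {j : Fin n | (j : ℕ) + 1 < n} := by
  refine Derivation.mem_supported_of_forall_mem _ a.val (fun j hj => ?_) hp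
  refine supported_mono (fun l hl => ?_) ((mem_triangular_iff _).mp a.2 j)
  have hl' : (l : ℕ) < (j : ℕ) := hl
  have := j.isLt
  show (l : ℕ) + 1 < n
  omega

theorem ad_Emk (hn : 2 ≤ n) (a : ↥(triangular K n)) (p : MvPolynomial (Fin n) K)
    (hp : p ∈ supported K {j : Fin n | (j : ℕ) + 1 < n}) :
    ⁅a, Emk K hn p hp⁆ = Emk K hn (a.val p) (triangular_stable a hp) := by
  apply Subtype.ext
  rw [LieSubalgebra.coe_bracket]
  apply derivation_ext
  intro i
  rw [Derivation.commutator_apply,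
    kills_low (Emk_Q hn p hp) ((mem_triangular_iff _).mp a.2 i), sub_zero,
    Emk_val, Emk_val, mkDerivation_X, mkDerivation_X]
  split_ifs
  · rfl
  · exact map_zero _

theorem ad_pow_Emk (hn : 2 ≤ n) (a : ↥(triangular K n)) (m : ℕ)
    (p : MvPolynomial (Fin n) K)
    (hp : p ∈ supported K {j : Fin n | (j : ℕ) + 1 < n}) :
    (((LieAlgebra.ad K ↥(triangular K n) a) ^ m) (Emk K hn p hp)).val
      = MvPolynomial.mkDerivation K
          (fun j : Fin n => if (j : ℕ) = n - 1 then (fun q => a.val q)^[m] p else 0) := by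
  induction m generalizing p with
  | zero => rw [pow_zero, Module.End.one_apply]; rfl
  | succ m ih =>
    rw [pow_succ, Module.End.mul_apply, LieAlgebra.ad_apply, ad_Emk hn a p hp,
      ih (a.val p) (triangular_stable a hp)]
    simp only [Function.iterate_succ_apply]

theorem iterate_mul_right (a : ↥(triangular K n)) (f : MvPolynomial (Fin n) K)
    (hf : a.val f = 0) (m : ℕ) (p : MvPolynomial (Fin n) K) :
    (fun q => a.val q)^[m] (p * f) = ((fun q => a.val q)^[m] p) * f := by
  induction m generalizing p with
  | zero => simp
  | succ m ih =>
    rw [Function.iterate_succ_apply, Function.iterate_succ_apply]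
    have h : a.val (p * f) = a.val p * f := by
      rw [Derivation.leibniz, smul_eq_mul, smul_eq_mul, hf, mul_zero, zero_add, mul_comm]
    show (fun q => a.val q)^[m] (a.val (p * f)) = _
    rw [h]
    exact ih (a.val p)

theorem iterate_smul (a : ↥(triangular K n)) (m : ℕ) (c : K) (p : MvPolynomial (Fin n) K) :
    (fun q => a.val q)^[m] (c • p) = c • (fun q => a.val q)^[m] p := by
  induction m generalizing p with
  | zero => simp
  | succ m ih =>
    rw [Function.iterate_succ_apply, Function.iterate_succ_apply]
    show (fun q => a.val q)^[m] (a.val (c • p)) = _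
    rw [Derivation.map_smul]
    exact ih (a.val p)

theorem iterate_key (a : ↥(triangular K n)) (i0 : Fin n)
    (hf : a.val (a.val (X i0)) = 0) (m : ℕ) :
    (fun q => a.val q)^[m] ((X i0 : MvPolynomial (Fin n) K) ^ m)
      = (m.factorial : K) • (a.val (X i0)) ^ m := by
  set f := a.val (X i0) with hfdef
  induction m with
  | zero => simp
  | succ m ih =>
    rw [Function.iterate_succ_apply]
    show (fun q => a.val q)^[m] (a.val ((X i0 : MvPolynomial (Fin n) K) ^ (m + 1))) = _
    rw [Derivation.leibniz_pow, ← hfdef, smul_eq_mul, Nat.add_sub_cancel,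
      ← Nat.cast_smul_eq_nsmul K, iterate_smul, iterate_mul_right a f hf, ih,
      smul_mul_assoc, ← pow_succ, smul_smul, ← Nat.cast_mul, ← Nat.factorial_succ]

theorem hard_dir [CharZero K] (hn : 2 ≤ n) (a : ↥(triangular K n))
    (hbad : ¬ ∀ j : Fin n, (j : ℕ) + 1 < n → a.val (X j) = 0) :
    ∀ m : ℕ, (LieAlgebra.ad K ↥(triangular K n) a) ^ m ≠ 0 := by
  classical
  push_neg at hbad
  obtain ⟨j0, hj0n, hj0⟩ := hbad
  have hP : ∃ k, ∃ h : k < n, a.val (X (⟨k, h⟩ : Fin n)) ≠ 0 :=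
    ⟨(j0 : ℕ), j0.isLt, by simpa using hj0⟩
  set k0 := Nat.find hP with hk0def
  obtain ⟨hk0n, hk0⟩ := Nat.find_spec hP
  set i0 : Fin n := ⟨k0, hk0n⟩ with hi0def
  have hmin : ∀ j : Fin n, (j : ℕ) < k0 → a.val (X j) = 0 := by
    intro j hj
    by_contra h
    exact Nat.find_min hP hj ⟨j.isLt, by simpa using h⟩
  have hk0small : k0 + 1 < n := by
    have : k0 ≤ (j0 : ℕ) := Nat.find_min' hP ⟨j0.isLt, by simpa using hj0⟩
    omega
  have hf : a.val (X i0) ≠ 0 := hk0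
  have haf : a.val (a.val (X i0)) = 0 :=
    Derivation.eq_zero_of_forall_eq_zero {j : Fin n | (j : ℕ) < k0} a.val
      (fun j hj => hmin j hj) ((mem_triangular_iff _).mp a.2 i0)
  intro m hm
  have hXmem : (X i0 : MvPolynomial (Fin n) K) ^ m
      ∈ supported K {j : Fin n | (j : ℕ) + 1 < n} :=
    pow_mem ((X_mem_supported (R := K) (s := {j : Fin n | (j : ℕ) + 1 < n}) (i := i0)).mpr (show (i0 : ℕ) + 1 < n from hk0small)) m
  have h1 : (((LieAlgebra.ad K ↥(triangular K n) a) ^ m)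
      (Emk K hn ((X i0 : MvPolynomial (Fin n) K) ^ m) hXmem)).val
      (X (⟨n - 1, by omega⟩ : Fin n)) = 0 := by
    rw [hm]
    simp
  rw [ad_pow_Emk hn a m _ hXmem, mkDerivation_X, if_pos rfl, iterate_key a i0 haf m] at h1
  exact smul_ne_zero (Nat.cast_ne_zero.mpr m.factorial_ne_zero) (pow_ne_zero m hf) h1

end Helpers

/-- For `n ≥ 2` and `a ∈ u_n` the following are equivalent:
(1) `ad a` is a nilpotent endomorphism; (2) `a ∈ P_{n-1}∂ₙ` (i.e. all the coefficients of
`a` at `∂₁,…,∂_{n-1}` vanish: `a (X j) = 0` for `j < n-1` zero-based); (3) `(ad a)² = 0`. -/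
theorem triangular_ad_nilpotent_iff
    (K : Type*) [Field K] [CharZero K] (n : ℕ) (hn : 2 ≤ n) (a : ↥(triangular K n)) :
    ((∃ m : ℕ, (LieAlgebra.ad K ↥(triangular K n) a) ^ m = 0) ↔
      (∀ j : Fin n, (j : ℕ) + 1 < n → a.val (X j) = 0)) ∧
    ((∀ j : Fin n, (j : ℕ) + 1 < n → a.val (X j) = 0) ↔
      (LieAlgebra.ad K ↥(triangular K n) a) ^ 2 = 0) := by
  constructor
  · constructor
    · intro hnil
      by_contra hbad
      obtain ⟨m, hm⟩ := hnil
      exact hard_dir hn a hbad m hm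
    · intro hQ
      exact ⟨2, sq_zero a hQ⟩
  · refine ⟨sq_zero a, fun h2 => ?_⟩
    by_contra hbad
    exact hard_dir hn a hbad 2 h2
end
end

section
/- Let n ≥ 2 and let U(u_n) be the universal enveloping algebra of the Lie algebra u_n. For every u ∈ u_n, the inner derivation ad(u) of the associative algebra U(u_n) (given by ad(u)(w) = uw − wu) is locally nilpotent: for every w ∈ U(u_n) there exists a natural number m with (ad u)^m(w) = 0. -/
open MvPolynomial

noncomputable section


/-!
Give `x_i` the weight `w_i = (d + 1) ^ (i + 1)`, where `d` bounds the degrees of the coefficients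
`u(x_i) ∈ K[x_j | j < i]`; then `u` lowers the weighted degree of every polynomial by at least one.
Weight shifts of derivations add under the bracket, and a derivation lowering all weights by more
than `max w_i` vanishes, so `ad u` is locally nilpotent on `u_n`. In `U(u_n)`, `ad (ι u)` is a
derivation of the associative product restricting to `ι ∘ ad u` on `ι(u_n)`; by the Leibniz rule the
elements killed by a power of it form a subalgebra, which contains the generators `ι(u_n)`.
-/

namespace Module.End

variable {R A : Type*} [CommRing R] [Ring A] [Algebra R A] {f : Module.End R A}

theorem pow_apply_mul_eq_zero_of_leibniz (hf : ∀ x y, f (x * y) = f x * y + x * f y)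
    {x y : A} {p q : ℕ} (hx : (f ^ p) x = 0) (hy : (f ^ q) y = 0) :
    (f ^ (p + q)) (x * y) = 0 := by
  have key : ∀ m i j : ℕ, p + q ≤ i + j + m → (f ^ m) ((f ^ i) x * (f ^ j) y) = 0 := by
    intro m
    induction m with
    | zero =>
      intro i j h
      rcases le_or_gt p i with hi | hi
      · rw [pow_zero, one_apply, pow_map_zero_of_le hi hx, zero_mul]
      · rw [pow_zero, one_apply, pow_map_zero_of_le (by omega) hy, mul_zero]
    | succ m ih =>
      intro i j h
      rw [pow_succ, mul_apply, hf, ← mul_apply, ← mul_apply, ← pow_succ', ← pow_succ', map_add,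
        ih (i + 1) j (by omega), ih i (j + 1) (by omega), add_zero]
  simpa using key (p + q) 0 0 (by omega)

theorem exists_pow_apply_eq_zero_of_mem_adjoin (hf : ∀ x y, f (x * y) = f x * y + x * f y)
    {s : Set A} (hs : ∀ x ∈ s, ∃ m, (f ^ m) x = 0) {x : A} (hx : x ∈ Algebra.adjoin R s) :
    ∃ m, (f ^ m) x = 0 := by
  induction hx using Algebra.adjoin_induction with
  | mem x hx => exact hs x hx
  | algebraMap r =>
    have hf_one : f 1 = 0 := by simpa using hf 1 1
    exact ⟨1, by rw [pow_one, Algebra.algebraMap_eq_smul_one, map_smul, hf_one, smul_zero]⟩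
  | add x y _ _ hx hy =>
    obtain ⟨p, hp⟩ := hx
    obtain ⟨q, hq⟩ := hy
    exact ⟨p + q, by rw [map_add, pow_map_zero_of_le (by omega) hp,
      pow_map_zero_of_le (by omega) hq, add_zero]⟩
  | mul x y _ _ hx hy =>
    obtain ⟨p, hp⟩ := hx
    obtain ⟨q, hq⟩ := hy
    exact ⟨p + q, pow_apply_mul_eq_zero_of_leibniz hf hp hq⟩

end Module.End

theorem LinearMap.mulLeft_sub_mulRight_apply_mul {R A : Type*} [CommRing R] [Ring A] [Algebra R A]
    (a x y : A) : (mulLeft R a - mulRight R a) (x * y) =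
      (mulLeft R a - mulRight R a) x * y + x * (mulLeft R a - mulRight R a) y := by
  simp only [sub_apply, mulLeft_apply, mulRight_apply]
  noncomm_ring

namespace UniversalEnvelopingAlgebra

variable {R L : Type*} [CommRing R] [LieRing L] [LieAlgebra R L]

theorem adjoin_range_ι :
    Algebra.adjoin R (Set.range (ι R : L → UniversalEnvelopingAlgebra R L)) = ⊤ := by
  have hrange : Set.range (ι R : L → UniversalEnvelopingAlgebra R L) =
      mkAlgHom R L '' Set.range (TensorAlgebra.ι R) := by
    rw [← Set.range_comp]; rfl
  rw [hrange, ← AlgHom.map_adjoin, TensorAlgebra.adjoin_range_ι, Algebra.map_top,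
    AlgHom.range_eq_top]
  exact RingCon.mkₐ_surjective (α := R) _

theorem mulLeft_sub_mulRight_ι_apply_ι (u x : L) :
    (LinearMap.mulLeft R (ι R u) - LinearMap.mulRight R (ι R u)) (ι R x) = ι R ⁅u, x⁆ := by
  let := LieRing.ofAssociativeRing (A := UniversalEnvelopingAlgebra R L)
  rw [LieHom.map_lie, LieRing.of_associative_ring_bracket]
  rfl

theorem pow_mulLeft_sub_mulRight_ι_apply_ι (u x : L) (m : ℕ) :
    ((LinearMap.mulLeft R (ι R u) - LinearMap.mulRight R (ι R u)) ^ m) (ι R x) =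
      ι R ((LieAlgebra.ad R L u ^ m) x) := by
  induction m generalizing x with
  | zero => rfl
  | succ m ih =>
    rw [pow_succ, Module.End.mul_apply, mulLeft_sub_mulRight_ι_apply_ι, ih, pow_succ,
      Module.End.mul_apply, LieAlgebra.ad_apply]

theorem exists_pow_mulLeft_sub_mulRight_ι_apply_eq_zero {u : L}
    (hu : ∀ x : L, ∃ m, (LieAlgebra.ad R L u ^ m) x = 0) (w : UniversalEnvelopingAlgebra R L) :
    ∃ m, ((LinearMap.mulLeft R (ι R u) - LinearMap.mulRight R (ι R u)) ^ m) w = 0 := by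
  refine Module.End.exists_pow_apply_eq_zero_of_mem_adjoin
    (LinearMap.mulLeft_sub_mulRight_apply_mul _) ?_ (adjoin_range_ι.ge (Algebra.mem_top (x := w)))
  rintro _ ⟨x, rfl⟩
  obtain ⟨m, hm⟩ := hu x
  exact ⟨m, by rw [pow_mulLeft_sub_mulRight_ι_apply_ι, hm, map_zero]⟩

end UniversalEnvelopingAlgebra

open Finsupp

theorem Finsupp.weight_le_degree_mul {σ : Type*} {w : σ → ℕ} {α : σ →₀ ℕ} {b : ℕ}
    (h : ∀ j ∈ α.support, w j ≤ b) : weight w α ≤ degree α * b := by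
  rw [weight_apply, degree_apply, Finset.sum_mul]
  exact Finset.sum_le_sum fun j hj => Nat.mul_le_mul_left _ (h j hj)

namespace MvPolynomial

section Weight

variable {R σ : Type*} [CommSemiring R] (w : σ → ℕ)

/-- The bound `a` is an integer because derivations may push it below zero. -/
noncomputable def weightLE (a : ℤ) : Submodule R (MvPolynomial σ R) :=
  restrictSupport R {α | (weight w α : ℤ) ≤ a}

variable {w}

theorem mem_weightLE_iff {a : ℤ} {p : MvPolynomial σ R} :
    p ∈ weightLE w a ↔ ∀ α ∈ p.support, (weight w α : ℤ) ≤ a :=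
  mem_restrictSupport_iff R

theorem weightLE_mono {a b : ℤ} (hab : a ≤ b) : weightLE (R := R) w a ≤ weightLE w b :=
  restrictSupport_mono R fun _ hα => le_trans hα hab

theorem monomial_mem_weightLE (α : σ →₀ ℕ) (c : R) : monomial α c ∈ weightLE w (weight w α) :=
  (monomial_mem_restrictSupport R).mpr (Or.inl (le_refl (weight w α : ℤ)))

theorem mem_weightLE_weightedTotalDegree (p : MvPolynomial σ R) :
    p ∈ weightLE w ((p.weightedTotalDegree w : ℕ) : ℤ) :=
  mem_weightLE_iff.mpr fun _ hα => Nat.cast_le.mpr (le_weightedTotalDegree w hα)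

theorem mul_mem_weightLE {a b : ℤ} {p q : MvPolynomial σ R} (hp : p ∈ weightLE w a)
    (hq : q ∈ weightLE w b) : p * q ∈ weightLE w (a + b) := by
  classical
  rw [mem_weightLE_iff] at hp hq ⊢
  intro α hα
  obtain ⟨β, hβ, γ, hγ, rfl⟩ := Finset.mem_add.mp (support_mul p q hα)
  rw [map_add, Nat.cast_add]
  exact add_le_add (hp β hβ) (hq γ hγ)

theorem eq_zero_of_mem_weightLE {a : ℤ} (ha : a < 0) {p : MvPolynomial σ R}
    (hp : p ∈ weightLE w a) : p = 0 := by
  rw [← support_eq_empty, Finset.eq_empty_iff_forall_notMem]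
  intro α hα
  have := mem_weightLE_iff.mp hp α hα
  omega

end Weight

section Derivation

variable {R σ : Type*} [CommRing R] (w : σ → ℕ)

def derivationWeightLE (e : ℤ) : Set (Derivation R (MvPolynomial σ R) (MvPolynomial σ R)) :=
  {D | ∀ i, D (X i) ∈ weightLE w (e + w i)}

variable {w}

theorem derivation_apply_mem_weightLE {e a : ℤ}
    {D : Derivation R (MvPolynomial σ R) (MvPolynomial σ R)} (hD : D ∈ derivationWeightLE w e)
    {p : MvPolynomial σ R} (hp : p ∈ weightLE w a) : D p ∈ weightLE w (a + e) := by
  have hD' : D = mkDerivation R fun i => D (X i) := derivation_ext fun i => by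
    rw [mkDerivation_X]
  rw [p.as_sum, map_sum]
  refine Submodule.sum_mem _ fun α hα => ?_
  rw [hD', mkDerivation_monomial]
  refine Submodule.smul_mem _ _ (Submodule.finsuppSum_mem _ _ _ _ fun i hi => ?_)
  have hw : (weight w (α - single i 1) : ℤ) + (e + w i) = weight w α + e := by
    rw [← weight_sub_single_add hi]; push_cast; ring
  refine weightLE_mono ?_ (mul_mem_weightLE (monomial_mem_weightLE _ _) (hD i))
  rw [hw]
  exact add_le_add_left (mem_weightLE_iff.mp hp α hα) e

theorem lie_mem_derivationWeightLE {e c : ℤ}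
    {D E : Derivation R (MvPolynomial σ R) (MvPolynomial σ R)}
    (hD : D ∈ derivationWeightLE w e) (hE : E ∈ derivationWeightLE w c) :
    ⁅D, E⁆ ∈ derivationWeightLE w (e + c) := by
  intro i
  rw [Derivation.commutator_apply]
  have hDE := derivation_apply_mem_weightLE hD (hE i)
  have hED := derivation_apply_mem_weightLE hE (hD i)
  rw [show c + w i + e = e + c + w i by ring] at hDE
  rw [show e + w i + c = e + c + w i by ring] at hED
  exact sub_mem hDE hED

theorem eq_zero_of_mem_derivationWeightLE {e : ℤ} (he : ∀ i, e + w i < 0)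
    {D : Derivation R (MvPolynomial σ R) (MvPolynomial σ R)} (hD : D ∈ derivationWeightLE w e) :
    D = 0 :=
  derivation_ext fun i => by rw [eq_zero_of_mem_weightLE (he i) (hD i), Derivation.zero_apply]

theorem exists_mem_derivationWeightLE [Fintype σ]
    (D : Derivation R (MvPolynomial σ R) (MvPolynomial σ R)) :
    ∃ e : ℕ, D ∈ derivationWeightLE w e := by
  refine ⟨∑ j, (D (X j)).weightedTotalDegree w, fun i => weightLE_mono ?_
    (mem_weightLE_weightedTotalDegree _)⟩
  have := Finset.single_le_sum (fun j _ => Nat.zero_le ((D (X j)).weightedTotalDegree w))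
    (Finset.mem_univ i)
  omega

theorem exists_pow_ad_apply_eq_zero_of_mem_derivationWeightLE [Fintype σ]
    {D : Derivation R (MvPolynomial σ R) (MvPolynomial σ R)} (hD : D ∈ derivationWeightLE w (-1))
    (E : Derivation R (MvPolynomial σ R) (MvPolynomial σ R)) :
    ∃ m, (LieAlgebra.ad R _ D ^ m) E = 0 := by
  obtain ⟨c, hE⟩ := exists_mem_derivationWeightLE (w := w) E
  have hiter : ∀ m : ℕ, (LieAlgebra.ad R _ D ^ m) E ∈ derivationWeightLE w (c - m) := by
    intro m
    induction m with
    | zero => simpa using hE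
    | succ m ih =>
      rw [pow_succ', Module.End.mul_apply, LieAlgebra.ad_apply]
      convert lie_mem_derivationWeightLE hD ih using 2
      omega
  refine ⟨c + ∑ j, w j + 1, eq_zero_of_mem_derivationWeightLE (fun i => ?_) (hiter _)⟩
  have := Finset.single_le_sum (fun j _ => Nat.zero_le (w j)) (Finset.mem_univ i)
  omega

end Derivation

end MvPolynomial

theorem exists_mem_derivationWeightLE_neg_one_of_mem_triangular {K : Type*} [Field K] {n : ℕ}
    {D : Derivation K (MvPolynomial (Fin n) K) (MvPolynomial (Fin n) K)}
    (hD : D ∈ triangular K n) : ∃ w : Fin n → ℕ, D ∈ derivationWeightLE w (-1) := by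
  set d := ∑ i, (D (X i)).totalDegree
  refine ⟨fun i => (d + 1) ^ ((i : ℕ) + 1), fun i => mem_weightLE_iff.mpr fun α hα => ?_⟩
  have hsupp : ∀ j ∈ α.support, (d + 1) ^ ((j : ℕ) + 1) ≤ (d + 1) ^ (i : ℕ) := fun j hj =>
    Nat.pow_le_pow_right (Nat.succ_pos d)
      (mem_supported.mp (hD i) ((mem_vars_iff_mem_support j).mpr ⟨α, hα, hj⟩))
  have hdeg : degree α ≤ d :=
    (le_totalDegree hα).trans <| Finset.single_le_sum (f := fun j => (D (X j)).totalDegree)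
      (fun j _ => Nat.zero_le _) (Finset.mem_univ i)
  have hlt : weight (fun j : Fin n => (d + 1) ^ ((j : ℕ) + 1)) α < (d + 1) ^ ((i : ℕ) + 1) :=
    calc _ ≤ degree α * (d + 1) ^ (i : ℕ) := weight_le_degree_mul hsupp
      _ ≤ d * (d + 1) ^ (i : ℕ) := Nat.mul_le_mul_right _ hdeg
      _ < (d + 1) ^ ((i : ℕ) + 1) := by
        rw [pow_succ']; exact Nat.mul_lt_mul_of_pos_right (Nat.lt_succ_self d) (by positivity)
  beta_reduce
  omega

theorem triangular.exists_pow_ad_apply_eq_zero {K : Type*} [Field K] {n : ℕ}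
    (u v : triangular K n) : ∃ m, (LieAlgebra.ad K (triangular K n) u ^ m) v = 0 := by
  obtain ⟨w, hu⟩ := exists_mem_derivationWeightLE_neg_one_of_mem_triangular u.2
  obtain ⟨m, hm⟩ := exists_pow_ad_apply_eq_zero_of_mem_derivationWeightLE hu (v : Derivation K _ _)
  exact ⟨m, Subtype.ext (by rw [LieSubalgebra.coe_ad_pow, hm, ZeroMemClass.coe_zero])⟩

theorem triangular_uea_ad_locally_nilpotent_general
    (K : Type*) [Field K] (n : ℕ)
    (u : ↥(triangular K n)) (w : UniversalEnvelopingAlgebra K ↥(triangular K n)) :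
    ∃ m : ℕ,
      (((LinearMap.mulLeft K (UniversalEnvelopingAlgebra.ι K u) -
          LinearMap.mulRight K (UniversalEnvelopingAlgebra.ι K u)) :
        Module.End K (UniversalEnvelopingAlgebra K ↥(triangular K n))) ^ m) w = 0 :=
  UniversalEnvelopingAlgebra.exists_pow_mulLeft_sub_mulRight_ι_apply_eq_zero
    (triangular.exists_pow_ad_apply_eq_zero u) w

/-- For `n ≥ 2` and `u ∈ u_n`, the inner derivation `ad u : w ↦ uw - wu`
of the universal enveloping algebra `U(u_n)` is locally nilpotent. -/
theorem triangular_uea_ad_locally_nilpotent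
    (K : Type*) [Field K] [CharZero K] (n : ℕ) (hn : 2 ≤ n)
    (u : ↥(triangular K n)) (w : UniversalEnvelopingAlgebra K ↥(triangular K n)) :
    ∃ m : ℕ,
      (((LinearMap.mulLeft K (UniversalEnvelopingAlgebra.ι K u) -
          LinearMap.mulRight K (UniversalEnvelopingAlgebra.ι K u)) :
        Module.End K (UniversalEnvelopingAlgebra K ↥(triangular K n))) ^ m) w = 0 :=
  triangular_uea_ad_locally_nilpotent_general K n u w
end
end

section
/- Let n ≥ 2. (1) The subspace D_n = K∂_1 ⊕ ⋯ ⊕ K∂_n of u_n satisfies Cen_{u_n}(D_n) = D_n; hence D_n is a maximal abelian Lie subalgebra of u_n. (2) The ideal P_{n-1}∂_n of u_n satisfies Cen_{u_n}(P_{n-1}∂_n) = P_{n-1}∂_n; hence P_{n-1}∂_n is a maximal abelian Lie subalgebra of u_n. -/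
/-! Both subspaces are self-centralizing, and a self-centralizing subspace is automatically a
maximal abelian subalgebra.

For `D_n`: a triangular derivation `a` commutes with `∂ᵢ` iff `∂ᵢ` kills every coefficient
`a(xⱼ)`, and in characteristic zero a polynomial killed by all `∂ᵢ` is a constant; derivations
with constant coefficients are exactly the span of the `∂ᵢ`.

For `P_{n-1}∂ₙ`: every coefficient of a triangular derivation lies in `P_{n-1}`, which
`P_{n-1}∂ₙ` kills, so the ideal is abelian. Conversely, evaluating `⁅a, xⱼ∂ₙ⁆ = 0` (`j < n`)
at `xₙ` gives `a(xⱼ) = xⱼ ∂ₙ(a(xₙ)) = 0`, because `a(xₙ) ∈ P_{n-1}`. -/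

open MvPolynomial

noncomputable section


namespace MvPolynomial

variable {R σ : Type*} [CommSemiring R]

theorem exists_eq_C_iff_forall_pderiv_eq_zero [NoZeroDivisors R] [CharZero R]
    {p : MvPolynomial σ R} : (∃ c, p = C c) ↔ ∀ i, pderiv i p = 0 := by
  classical
  refine ⟨fun ⟨c, hc⟩ i => hc ▸ pderiv_C, fun h => ⟨coeff 0 p, ?_⟩⟩
  ext m
  rw [coeff_C]
  split_ifs with hm
  · rw [hm]
  obtain ⟨i, hi⟩ : ∃ i, m i ≠ 0 := by simpa [Finsupp.ext_iff, eq_comm] using hm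
  have hle : Finsupp.single i 1 ≤ m := Finsupp.single_le_iff.mpr (Nat.one_le_iff_ne_zero.mpr hi)
  have hcoeff := coeff_pderiv (i := i) p (m - Finsupp.single i 1)
  rw [h i, tsub_add_cancel_of_le hle, coeff_zero] at hcoeff
  exact (mul_eq_zero.mp hcoeff.symm).resolve_right (Nat.cast_add_one_ne_zero _)

theorem pderiv_eq_zero_of_mem_supported {s : Set σ} {i : σ} (hi : i ∉ s) {p : MvPolynomial σ R}
    (hp : p ∈ supported R s) : pderiv i p = 0 :=
  pderiv_eq_zero_of_notMem_vars fun hv => hi (mem_supported.mp hp hv)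

end MvPolynomial

theorem Derivation.finset_sum_apply {R A M ι : Type*} [CommSemiring R] [CommSemiring A]
    [AddCommMonoid M] [Algebra R A] [Module A M] [Module R M] (s : Finset ι)
    (D : ι → Derivation R A M) (a : A) : (∑ i ∈ s, D i) a = ∑ i ∈ s, D i a := by
  change Derivation.coeFnAddMonoidHom (∑ i ∈ s, D i) a = _
  rw [map_sum, Finset.sum_apply]
  rfl

namespace Submodule

variable {R L : Type*} [CommRing R] [LieRing L] [LieAlgebra R L]

def IsSelfCentralizing (S : Submodule R L) : Prop :=
  ∀ a : L, (∀ b ∈ S, ⁅a, b⁆ = 0) ↔ a ∈ S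

theorem forall_mem_span_lie_eq_zero_iff (a : L) (s : Set L) :
    (∀ b ∈ span R s, ⁅a, b⁆ = 0) ↔ ∀ b ∈ s, ⁅a, b⁆ = 0 := by
  refine ⟨fun h b hb => h b (subset_span hb), fun h b hb => ?_⟩
  induction hb using span_induction with
  | mem x hx => exact h x hx
  | zero => exact lie_zero a
  | add x y _ _ hx hy => rw [lie_add, hx, hy, add_zero]
  | smul c x _ hx => rw [lie_smul, hx, smul_zero]

namespace IsSelfCentralizing

variable {S : Submodule R L} (hS : S.IsSelfCentralizing)
include hS

theorem lie_eq_zero {a b : L} (ha : a ∈ S) (hb : b ∈ S) : ⁅a, b⁆ = 0 :=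
  (hS a).mpr ha b hb

theorem eq_of_le {A : Submodule R L} (hle : S ≤ A) (hA : ∀ a ∈ A, ∀ b ∈ A, ⁅a, b⁆ = 0) :
    A = S :=
  le_antisymm (fun a ha => (hS a).mp fun b hb => hA a ha b (hle hb)) hle

end IsSelfCentralizing

end Submodule

section Triangular

variable {K : Type*} [Field K] {n : ℕ}

theorem triangular.lie_eq_zero_iff (a b : triangular K n) :
    ⁅a, b⁆ = 0 ↔ ∀ i, a.val (b.val (X i)) = b.val (a.val (X i)) := by
  rw [← LieSubalgebra.coe_zero_iff_zero, LieSubalgebra.coe_bracket]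
  refine ⟨fun h i => ?_, fun h => derivation_ext fun i => ?_⟩
  · simpa [Derivation.commutator_apply, sub_eq_zero] using DFunLike.congr_fun h (X i)
  · simpa [Derivation.commutator_apply, sub_eq_zero] using h i

@[simp]
theorem coe_pd (i : Fin n) : (pd K n i : Derivation K (MvPolynomial (Fin n) K) _) = pderiv i :=
  rfl

theorem lie_pd_eq_zero_iff (a : triangular K n) (i : Fin n) :
    ⁅a, pd K n i⁆ = 0 ↔ ∀ j, pderiv i (a.val (X j)) = 0 := by
  classical
  have ha : ∀ j, a.val (pderiv i (X j)) = 0 := fun j => by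
    rw [pderiv_X]
    rcases eq_or_ne i j with rfl | hij <;> simp [*]
  simp only [triangular.lie_eq_zero_iff, coe_pd, ha, eq_comm]

theorem mem_span_pd_iff (a : triangular K n) :
    a ∈ Submodule.span K (Set.range (pd K n)) ↔ ∀ i, ∃ c, a.val (X i) = C c := by
  classical
  constructor
  · intro ha i
    induction ha using Submodule.span_induction with
    | mem x hx =>
      obtain ⟨j, rfl⟩ := hx
      rcases eq_or_ne i j with rfl | hij
      · exact ⟨1, by simp⟩
      · exact ⟨0, by simp [pderiv_X_of_ne hij]⟩
    | zero => exact ⟨0, by simp⟩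
    | add x y _ _ hx hy =>
      obtain ⟨c, hc⟩ := hx
      obtain ⟨d, hd⟩ := hy
      exact ⟨c + d, by simp [hc, hd]⟩
    | smul k x _ hx =>
      obtain ⟨c, hc⟩ := hx
      exact ⟨k * c, by simp [hc, smul_eq_C_mul]⟩
  · intro h
    choose c hc using h
    have ha : a = ∑ i, c i • pd K n i := by
      refine Subtype.ext (derivation_ext fun j => ?_)
      simp [Derivation.finset_sum_apply, hc, pderiv_X, Pi.single_apply, smul_eq_C_mul]
    exact ha ▸ Submodule.sum_mem _ fun i _ =>
      Submodule.smul_mem _ _ (Submodule.subset_span ⟨i, rfl⟩)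

theorem lowIdeal_apply_eq_zero {k : ℕ} {a : triangular K n} (ha : a ∈ lowIdeal K n k)
    {p : MvPolynomial (Fin n) K} (hp : p ∈ supported K {j : Fin n | (j : ℕ) < k}) :
    a.val p = 0 :=
  Derivation.eq_zero_of_forall_eq_zero _ _ (fun j hj => ha j hj) hp

theorem triangular.apply_X_mem_supported (a : triangular K n) (i : Fin n) :
    a.val (X i) ∈ supported K {j : Fin n | (j : ℕ) < i} :=
  (mem_triangular_iff a.val).mp a.property i

theorem triangular.apply_X_mem_supported_lt_last (a : triangular K n) (i : Fin n) :
    a.val (X i) ∈ supported K {j : Fin n | (j : ℕ) < n - 1} := by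
  refine supported_mono (fun j hj => ?_) (triangular.apply_X_mem_supported a i)
  simp only [Set.mem_ofPred_eq] at hj ⊢
  omega

theorem lie_eq_zero_of_mem_lowIdeal {a b : triangular K n} (ha : a ∈ lowIdeal K n (n - 1))
    (hb : b ∈ lowIdeal K n (n - 1)) : ⁅a, b⁆ = 0 :=
  (triangular.lie_eq_zero_iff a b).mpr fun i => by
    rw [lowIdeal_apply_eq_zero ha (triangular.apply_X_mem_supported_lt_last b i),
      lowIdeal_apply_eq_zero hb (triangular.apply_X_mem_supported_lt_last a i)]

theorem smul_pderiv_mem_triangular (i : Fin n) {p : MvPolynomial (Fin n) K}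
    (hp : p ∈ supported K {j : Fin n | (j : ℕ) < i}) : p • pderiv i ∈ triangular K n := by
  rw [mem_triangular_iff]
  intro j
  rcases eq_or_ne j i with rfl | hji
  · simpa using hp
  · simp [pderiv_X_of_ne hji]

theorem mem_lowIdeal_of_forall_lie_eq_zero {a : triangular K n}
    (h : ∀ b ∈ lowIdeal K n (n - 1), ⁅a, b⁆ = 0) : a ∈ lowIdeal K n (n - 1) := by
  show ∀ j : Fin n, (j : ℕ) < n - 1 → a.val (X j) = 0
  intro j hj
  let last : Fin n := ⟨n - 1, by omega⟩
  have hXj : X j ∈ supported K {l : Fin n | (l : ℕ) < last} := X_mem_supported.mpr hj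
  let b : triangular K n := ⟨X j • pderiv last, smul_pderiv_mem_triangular last hXj⟩
  have hb : b ∈ lowIdeal K n (n - 1) := by
    show ∀ l : Fin n, (l : ℕ) < n - 1 → b.val (X l) = 0
    intro l hl
    simp [b, pderiv_X_of_ne (Fin.ne_of_val_ne hl.ne : l ≠ last)]
  have hlast : pderiv last (a.val (X last)) = 0 :=
    pderiv_eq_zero_of_mem_supported (by simp)
      (triangular.apply_X_mem_supported a last)
  simpa [b, hlast] using (triangular.lie_eq_zero_iff a b).mp (h b hb) last

theorem isSelfCentralizing_span_pd [CharZero K] :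
    (Submodule.span K (Set.range (pd K n))).IsSelfCentralizing := fun a => by
  rw [Submodule.forall_mem_span_lie_eq_zero_iff, Set.forall_mem_range, mem_span_pd_iff]
  simp only [lie_pd_eq_zero_iff, exists_eq_C_iff_forall_pderiv_eq_zero]
  exact forall_comm

theorem isSelfCentralizing_lowIdeal :
    (lowIdeal K n (n - 1)).IsSelfCentralizing := fun _ =>
  ⟨mem_lowIdeal_of_forall_lie_eq_zero, fun ha _ hb => lie_eq_zero_of_mem_lowIdeal ha hb⟩

end Triangular

theorem triangular_centralizers_general
    (K : Type*) [Field K] [CharZero K] (n : ℕ) :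
    ((∀ a : ↥(triangular K n),
        (∀ b ∈ Submodule.span K (Set.range (pd K n)), ⁅a, b⁆ = 0) ↔
          a ∈ Submodule.span K (Set.range (pd K n))) ∧
      (∀ a ∈ Submodule.span K (Set.range (pd K n)),
        ∀ b ∈ Submodule.span K (Set.range (pd K n)),
          ⁅a, b⁆ = (0 : ↥(triangular K n))) ∧
      (∀ A : Submodule K ↥(triangular K n),
        Submodule.span K (Set.range (pd K n)) ≤ A →
        (∀ a ∈ A, ∀ b ∈ A, ⁅a, b⁆ = (0 : ↥(triangular K n))) →
        A = Submodule.span K (Set.range (pd K n)))) ∧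
    ((∀ a : ↥(triangular K n),
        (∀ b ∈ lowIdeal K n (n - 1), ⁅a, b⁆ = 0) ↔ a ∈ lowIdeal K n (n - 1)) ∧
      (∀ a ∈ lowIdeal K n (n - 1), ∀ b ∈ lowIdeal K n (n - 1),
        ⁅a, b⁆ = (0 : ↥(triangular K n))) ∧
      (∀ A : Submodule K ↥(triangular K n), lowIdeal K n (n - 1) ≤ A →
        (∀ a ∈ A, ∀ b ∈ A, ⁅a, b⁆ = (0 : ↥(triangular K n))) →
        A = lowIdeal K n (n - 1))) := by
  have hD : (Submodule.span K (Set.range (pd K n))).IsSelfCentralizing :=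
    isSelfCentralizing_span_pd
  have hP : (lowIdeal K n (n - 1)).IsSelfCentralizing := isSelfCentralizing_lowIdeal
  exact ⟨⟨hD, fun _ ha _ hb => hD.lie_eq_zero ha hb, fun _ => hD.eq_of_le⟩,
    ⟨hP, fun _ ha _ hb => hP.lie_eq_zero ha hb, fun _ => hP.eq_of_le⟩⟩

/-- For `n ≥ 2`:
(1) the subspace `D_n = K∂₁ ⊕ ⋯ ⊕ K∂ₙ` (the span of the partial derivatives) is its own
centralizer in `u_n`, hence is a maximal abelian Lie subalgebra of `u_n`;
(2) the ideal `P_{n-1}∂ₙ` is its own centralizer in `u_n`, hence is a maximal abelian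
Lie subalgebra of `u_n`. -/
theorem triangular_centralizers
    (K : Type*) [Field K] [CharZero K] (n : ℕ) (hn : 2 ≤ n) :
    ((∀ a : ↥(triangular K n),
        (∀ b ∈ Submodule.span K (Set.range (pd K n)), ⁅a, b⁆ = 0) ↔
          a ∈ Submodule.span K (Set.range (pd K n))) ∧
      (∀ a ∈ Submodule.span K (Set.range (pd K n)),
        ∀ b ∈ Submodule.span K (Set.range (pd K n)),
          ⁅a, b⁆ = (0 : ↥(triangular K n))) ∧
      (∀ A : Submodule K ↥(triangular K n),
        Submodule.span K (Set.range (pd K n)) ≤ A →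
        (∀ a ∈ A, ∀ b ∈ A, ⁅a, b⁆ = (0 : ↥(triangular K n))) →
        A = Submodule.span K (Set.range (pd K n)))) ∧
    ((∀ a : ↥(triangular K n),
        (∀ b ∈ lowIdeal K n (n - 1), ⁅a, b⁆ = 0) ↔ a ∈ lowIdeal K n (n - 1)) ∧
      (∀ a ∈ lowIdeal K n (n - 1), ∀ b ∈ lowIdeal K n (n - 1),
        ⁅a, b⁆ = (0 : ↥(triangular K n))) ∧
      (∀ A : Submodule K ↥(triangular K n), lowIdeal K n (n - 1) ≤ A →
        (∀ a ∈ A, ∀ b ∈ A, ⁅a, b⁆ = (0 : ↥(triangular K n))) →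
        A = lowIdeal K n (n - 1))) :=
  triangular_centralizers_general K n
end
end

section
/- Let G be a Lie algebra over a field K of characteristic zero and let J be an ideal of G such that: (i) the quotient Lie algebra G/J is finite-dimensional and nilpotent; (ii) J is a nilpotent Lie algebra; (iii) every element a ∈ G acts nilpotently on J, i.e., there is a natural number m = m(a) with (ad a)^m(J) = 0. Then G is a nilpotent Lie algebra. -/
/-!
The terms `Jᵏ` of the lower central series of `J` (`J⁰ = J`, `Jᵏ⁺¹ = ⁅J, Jᵏ⁆`) are ideals of `G`,
and `Jᵏ = 0` for large `k`. On each factor `Jᵏ / Jᵏ⁺¹` the ideal `J` acts trivially, so the action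
of `G` factors through the finite-dimensional Lie algebra `G ⧸ J`; since every element of `G` acts
nilpotently, Engel's theorem makes each factor a nilpotent `G`-module. Hence `J` is a nilpotent
`G`-module, and since `G ⧸ J` is nilpotent too, so is `G`.
-/

open LieModule

attribute [local instance 100] LieRing.ofAssociativeRing

section

variable {R L M : Type*} [CommRing R] [LieRing L] [LieAlgebra R L]
  [AddCommGroup M] [Module R M] [LieRingModule L M] [LieModule R L M]

theorem LieModuleHom.map_toEnd_pow_apply {M₂ : Type*} [AddCommGroup M₂] [Module R M₂]
    [LieRingModule L M₂] [LieModule R L M₂] (f : M →ₗ⁅R,L⁆ M₂) (x : L) (n : ℕ) (m : M) :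
    f ((toEnd R L M x ^ n) m) = (toEnd R L M₂ x ^ n) (f m) := by
  induction n with
  | zero => rfl
  | succ n ih => rw [pow_succ', pow_succ', Module.End.mul_apply, Module.End.mul_apply,
      toEnd_apply_apply, toEnd_apply_apply, f.map_lie, ih]

theorem LieModule.lowerCentralSeries_add_le {N N' : LieSubmodule R L M} {m n : ℕ}
    (hn : lowerCentralSeries R L M n ≤ N) (hm : N.lcs m ≤ N') :
    lowerCentralSeries R L M (n + m) ≤ N' :=
  (LieSubmodule.lcs_add_le_iff n m).mpr (hn.trans ((LieSubmodule.lcs_le_iff m).mp hm))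

theorem LieModule.isNilpotent_of_isNilpotent_quotient (N : LieSubmodule R L M)
    [IsNilpotent L N] [IsNilpotent L (M ⧸ N)] : IsNilpotent L M := by
  obtain ⟨n, hn⟩ := (isNilpotent_quotient_iff R L M N).mp ‹_›
  obtain ⟨m, hm⟩ := N.isNilpotent_iff_exists_lcs_eq_bot.mp ‹_›
  exact (isNilpotent_iff R L M).mpr ⟨n + m, le_bot_iff.mp (lowerCentralSeries_add_le hn hm.le)⟩

theorem LieModule.isNilpotent_of_exists_lcs_le_succ (N : ℕ → LieSubmodule R L M)
    (h_zero : N 0 = ⊤) (h_succ : ∀ k, ∃ m, (N k).lcs m ≤ N (k + 1)) (h_bot : ∃ k, N k = ⊥) :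
    IsNilpotent L M := by
  have h_lcs : ∀ k, ∃ n, lowerCentralSeries R L M n ≤ N k := by
    intro k
    induction k with
    | zero => exact ⟨0, by simp [h_zero]⟩
    | succ k ih =>
      obtain ⟨n, hn⟩ := ih
      obtain ⟨m, hm⟩ := h_succ k
      exact ⟨n + m, lowerCentralSeries_add_le hn hm⟩
  obtain ⟨k, hk⟩ := h_bot
  obtain ⟨n, hn⟩ := h_lcs k
  exact (isNilpotent_iff R L M).mpr ⟨n, le_bot_iff.mp (hk ▸ hn)⟩

variable (J : LieIdeal R L) [IsNoetherian R (L ⧸ J)]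

theorem LieModule.isNilpotent_of_le_ker (hJ : J ≤ LieModule.ker R L M)
    (h : ∀ x : L, _root_.IsNilpotent (toEnd R L M x)) : IsNilpotent L M := by
  have hker : (J : Submodule R L) ≤ LinearMap.ker (toEnd R L M).rangeRestrict.toLinearMap :=
    fun x hx ↦ Subtype.ext (LieHom.mem_ker.mp (hJ hx))
  have : IsNoetherian R (toEnd R L M).range := by
    refine isNoetherian_of_surjective (Submodule.liftQ _ _ hker : L ⧸ J →ₗ[R] _)
      (LinearMap.range_eq_top.mpr fun y ↦ ?_)
    obtain ⟨x, rfl⟩ := LieHom.surjective_rangeRestrict _ y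
    exact ⟨Submodule.Quotient.mk x, rfl⟩
  rw [← isNilpotent_range_toEnd_iff (R := R), isNilpotent_iff_forall (R := R)]
  rintro ⟨_, x, rfl⟩
  exact h x

theorem LieSubmodule.exists_lcs_le_of_lie_le (h : ∀ x : L, _root_.IsNilpotent (toEnd R L M x))
    {N N' : LieSubmodule R L M} (hJ : ⁅J, N⁆ ≤ N') : ∃ k, N.lcs k ≤ N' := by
  let N'' : LieSubmodule R L N := N'.comap N.incl
  have h_ker : J ≤ LieModule.ker R L (N ⧸ N'') := by
    refine fun x hx ↦ (LieModule.mem_ker R L _ x).mpr fun q ↦ ?_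
    obtain ⟨m, rfl⟩ := LieSubmodule.Quotient.surjective_mk' N'' q
    rw [← LieModuleHom.map_lie, LieSubmodule.Quotient.mk_eq_zero]
    exact hJ (LieSubmodule.lie_mem_lie hx m.2)
  have h_nil : ∀ x : L, _root_.IsNilpotent (toEnd R L (N ⧸ N'') x) := by
    intro x
    obtain ⟨n, hn⟩ := h x
    refine ⟨n, LinearMap.ext fun q ↦ ?_⟩
    obtain ⟨m, rfl⟩ := LieSubmodule.Quotient.surjective_mk' N'' q
    have : (toEnd R L N x ^ n) m = 0 :=
      Subtype.ext <| (N.incl.map_toEnd_pow_apply x n m).trans (by simp [hn])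
    rw [← LieModuleHom.map_toEnd_pow_apply, this, map_zero, LinearMap.zero_apply]
  obtain ⟨k, hk⟩ := (isNilpotent_quotient_iff R L N N'').mp (isNilpotent_of_le_ker J h_ker h_nil)
  refine ⟨k, fun m hm ↦ ?_⟩
  have hmN : m ∈ N := N.lcs_le_self k hm
  rw [lowerCentralSeries_eq_lcs_comap] at hk
  exact hk (show (⟨m, hmN⟩ : N) ∈ (N.lcs k).comap N.incl from hm)

theorem LieModule.isNilpotent_of_isNilpotent_ideal [IsNilpotent J M]
    (h : ∀ x : L, _root_.IsNilpotent (toEnd R L M x)) : IsNilpotent L M := by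
  refine isNilpotent_of_exists_lcs_le_succ (J.lcs M) (J.lcs_zero M)
    (fun k ↦ LieSubmodule.exists_lcs_le_of_lie_le J h (J.lcs_succ M k).ge) ?_
  obtain ⟨k, hk⟩ := (isNilpotent_iff R J M).mp ‹_›
  exact ⟨k, by rw [← LieSubmodule.toSubmodule_inj, J.coe_lcs_eq, hk]; rfl⟩

end

theorem lie_nilpotent_of_quotient_and_ideal_general
    (K : Type*) [Field K] (G : Type*) [LieRing G] [LieAlgebra K G]
    (J : LieIdeal K G)
    (h1 : FiniteDimensional K (G ⧸ J))
    (h2 : LieRing.IsNilpotent (G ⧸ J))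
    (h3 : LieRing.IsNilpotent ↥J)
    (h4 : ∀ a : G, ∃ m : ℕ, ∀ b ∈ J, ((LieAlgebra.ad K G a) ^ m) b = 0) :
    LieRing.IsNilpotent G := by
  have : LieModule.IsNilpotent G (G ⧸ J) := by
    simp only [LieRing.IsNilpotent, LieModule.isNilpotent_iff K] at h2 ⊢
    peel h2 with k hk
    simp [← LieSubmodule.toSubmodule_inj, coe_lowerCentralSeries_ideal_quot_eq, hk]
  have : LieModule.IsNilpotent G J := by
    refine LieModule.isNilpotent_of_isNilpotent_ideal (R := K) J fun a ↦ ?_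
    obtain ⟨m, hm⟩ := h4 a
    refine ⟨m, LinearMap.ext fun b ↦ Subtype.ext ?_⟩
    exact ((LieSubmodule.incl J).map_toEnd_pow_apply a m b).trans (hm b b.2)
  exact LieModule.isNilpotent_of_isNilpotent_quotient (R := K) J

/-- Let `G` be a Lie algebra over a field `K` of characteristic zero and
`J` an ideal of `G` such that: (i) `G/J` is a finite-dimensional nilpotent Lie algebra;
(ii) `J` is a nilpotent Lie algebra; (iii) every `a ∈ G` acts nilpotently on `J`.
Then `G` is a nilpotent Lie algebra. -/
theorem lie_nilpotent_of_quotient_and_ideal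
    (K : Type*) [Field K] [CharZero K] (G : Type*) [LieRing G] [LieAlgebra K G]
    (J : LieIdeal K G)
    (h1 : FiniteDimensional K (G ⧸ J))
    (h2 : LieRing.IsNilpotent (G ⧸ J))
    (h3 : LieRing.IsNilpotent ↥J)
    (h4 : ∀ a : G, ∃ m : ℕ, ∀ b ∈ J, ((LieAlgebra.ad K G a) ^ m) b = 0) :
    LieRing.IsNilpotent G :=
  lie_nilpotent_of_quotient_and_ideal_general K G J h1 h2 h3 h4
end
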